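/- arXiv:2412.06490 — 5 statements merged into one kernel-verified Lean document; each statement's English description precedes it below -/
import Mathlib

section
/- For every t and every n ≥ 2t, there exists a family A of n horizontal segments in the plane containing at least t·(n − 2t + 1) canonical t-tuples, i.e., the bound O(t·|A|) on the number of canonical t-tuples is tight up to a constant factor. -/
/-- The horizontal segment from `(xl, y)` to `(xr, y)`. -/
def horizSeg (xl xr y : ℝ) : Set (ℝ × ℝ) := Set.Icc xl xr ×ˢ {y}

/-- The vertical segment from `(x, yb)` to `(x, yt)`. -/
def vertSeg (x yb yt : ℝ) : Set (ℝ × ℝ) := {x} ×ˢ Set.Icc yb yt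

/-- A `t`-tuple of segments of the family `A` is canonical if there is a vertical
segment meeting exactly the segments of that tuple. -/
def IsCanonical {n : ℕ} (A : Fin n → Set (ℝ × ℝ)) (t : ℕ) (I : Finset (Fin n)) : Prop :=
  I.card = t ∧ ∃ x yb yt : ℝ, yb ≤ yt ∧
    ∀ i : Fin n, ((A i ∩ vertSeg x yb yt).Nonempty ↔ i ∈ I)

lemma horiz_vert_inter {a b y x c d : ℝ} :
    (horizSeg a b y ∩ vertSeg x c d).Nonempty ↔ a ≤ x ∧ x ≤ b ∧ c ≤ y ∧ y ≤ d := by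
  constructor
  · rintro ⟨⟨p1, p2⟩, hp1, hp2⟩
    simp only [horizSeg, vertSeg, Set.mem_prod, Set.mem_Icc, Set.mem_singleton_iff] at hp1 hp2
    obtain ⟨⟨ha, hb⟩, hy⟩ := hp1
    obtain ⟨hx, hc, hd⟩ := hp2
    subst hx; subst hy
    exact ⟨ha, hb, hc, hd⟩
  · rintro ⟨h1, h2, h3, h4⟩
    refine ⟨(x, y), ?_, ?_⟩
    · simp only [horizSeg, Set.mem_prod, Set.mem_Icc, Set.mem_singleton_iff]
      exact ⟨⟨h1, h2⟩, trivial⟩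
    · simp only [vertSeg, Set.mem_prod, Set.mem_Icc, Set.mem_singleton_iff]
      exact ⟨trivial, h3, h4⟩

lemma horizSeg_eq_y {a b y a' b' y' : ℝ} (hab : a ≤ b) (h : horizSeg a b y = horizSeg a' b' y') :
    y = y' := by
  have hm : (a, y) ∈ horizSeg a' b' y' := by
    rw [← h]
    simp only [horizSeg, Set.mem_prod, Set.mem_Icc, Set.mem_singleton_iff]
    exact ⟨⟨le_refl a, hab⟩, trivial⟩
  simp only [horizSeg, Set.mem_prod, Set.mem_Icc, Set.mem_singleton_iff] at hm
  exact hm.2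

/-- The family of segments: for `i < t` the bottom long segments at even heights `2i`,
for `t ≤ i < 2t` the top long segments at odd heights `2i+2n+1`, and for `i ≥ 2t`
short segments at heights `2i` with x-range `[2i, 2i+1]`. -/
def famA (t n : ℕ) : Fin n → Set (ℝ × ℝ) := fun i =>
  if (i : ℕ) < t then horizSeg 0 (2 * n + 2) (2 * (i : ℕ))
  else if (i : ℕ) < 2 * t then horizSeg 0 (2 * n + 2) (2 * (i : ℕ) + 2 * n + 1)
  else horizSeg (2 * (i : ℕ)) (2 * (i : ℕ) + 1) (2 * (i : ℕ))

/-- The underlying set of indices of a canonical tuple. -/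
def tupleS (t m : ℕ) (a : Fin t) (j : Fin (m + 1)) : Finset ℕ :=
  if (j : ℕ) < m then Finset.Ico ((a : ℕ) + 1) (t + (a : ℕ)) ∪ {2 * t + (j : ℕ)}
  else Finset.Ico (a : ℕ) (t + (a : ℕ))

/-- For every `t` and every `n ≥ 2t` there is a family of `n` (distinct) horizontal
segments with at least `t·(n − 2t + 1)` canonical `t`-tuples. -/
theorem canonical_tuples_lower_bound (t n : ℕ) (ht : 1 ≤ t) (hn : 2 * t ≤ n) :
    ∃ A : Fin n → Set (ℝ × ℝ),
      (∀ i, ∃ xl xr y : ℝ, xl ≤ xr ∧ A i = horizSeg xl xr y) ∧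
      Function.Injective A ∧
      t * (n - 2 * t + 1) ≤ {I : Finset (Fin n) | IsCanonical A t I}.ncard := by
  set m := n - 2 * t with hm
  have hn2 : n = 2 * t + m := by omega
  refine ⟨famA t n, ?_, ?_, ?_⟩
  · intro i
    unfold famA
    split_ifs with h1 h2
    · exact ⟨0, 2 * n + 2, 2 * (i : ℕ), by positivity, rfl⟩
    · exact ⟨0, 2 * n + 2, 2 * (i : ℕ) + 2 * n + 1, by positivity, rfl⟩
    · exact ⟨2 * (i : ℕ), 2 * (i : ℕ) + 1, 2 * (i : ℕ), by norm_num, rfl⟩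
  · -- injectivity
    intro i j hij
    have hij' := hij
    unfold famA at hij'
    apply Fin.ext
    have hxa : ∀ k : Fin n, (0:ℝ) ≤ 2 * n + 2 := by intro k; positivity
    have hxb : ∀ k : Fin n, (2 * ((k:ℕ):ℝ)) ≤ 2 * ((k:ℕ):ℝ) + 1 := by intro k; norm_num
    split_ifs at hij' with h1 h2 h3 h4 h5 h6 h7 h8 <;>
      [ (have hy := horizSeg_eq_y (hxa i) hij');
        (have hy := horizSeg_eq_y (hxa i) hij');
        (have hy := horizSeg_eq_y (hxa i) hij');
        (have hy := horizSeg_eq_y (hxa i) hij');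
        (have hy := horizSeg_eq_y (hxa i) hij');
        (have hy := horizSeg_eq_y (hxa i) hij');
        (have hy := horizSeg_eq_y (hxb i) hij');
        (have hy := horizSeg_eq_y (hxb i) hij');
        (have hy := horizSeg_eq_y (hxb i) hij')] <;>
      (norm_cast at hy) <;> omega
  · -- counting
    have hbound : ∀ (a : Fin t) (j : Fin (m + 1)), ∀ v ∈ tupleS t m a j, v < n := by
      intro a j v hv
      have ha := a.isLt
      have hj := j.isLt
      unfold tupleS at hv
      split_ifs at hv with h
      · simp only [Finset.mem_union, Finset.mem_Ico, Finset.mem_singleton] at hv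
        omega
      · simp only [Finset.mem_Ico] at hv
        omega
    set G : Fin t × Fin (m + 1) → Finset (Fin n) :=
      fun p => (tupleS t m p.1 p.2).attachFin (hbound p.1 p.2) with hG
    -- membership characterization for intersections with vertical segments
    have key : ∀ (i : Fin n) (x c d : ℝ), ((famA t n i ∩ vertSeg x c d).Nonempty ↔
        (if (i : ℕ) < t then 0 ≤ x ∧ x ≤ 2 * n + 2 ∧ c ≤ 2 * (i : ℕ) ∧ 2 * (i : ℕ) ≤ d
         else if (i : ℕ) < 2 * t then
           0 ≤ x ∧ x ≤ 2 * n + 2 ∧ c ≤ 2 * (i : ℕ) + 2 * n + 1 ∧ 2 * (i : ℕ) + 2 * n + 1 ≤ d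
         else 2 * (i : ℕ) ≤ x ∧ x ≤ 2 * (i : ℕ) + 1 ∧ c ≤ 2 * (i : ℕ) ∧ 2 * (i : ℕ) ≤ d)) := by
      intro i x c d
      unfold famA
      split_ifs <;> exact horiz_vert_inter
    -- each G p is canonical
    have hcanon : ∀ p : Fin t × Fin (m + 1), IsCanonical (famA t n) t (G p) := by
      rintro ⟨a, j⟩
      have ha := a.isLt
      have hj := j.isLt
      constructor
      · -- cardinality
        show ((tupleS t m a j).attachFin (hbound a j)).card = t
        rw [Finset.card_attachFin]
        unfold tupleS
        split_ifs with h
        · rw [Finset.card_union_of_disjoint, Nat.card_Ico, Finset.card_singleton]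
          · omega
          · simp only [Finset.disjoint_singleton_right, Finset.mem_Ico]
            omega
        · rw [Nat.card_Ico]; omega
      · by_cases hjm : (j : ℕ) < m
        · -- short-segment tuple
          refine ⟨4 * t + 2 * (j : ℕ), 2 * (a : ℕ) + 1, 2 * t + 2 * (a : ℕ) + 2 * n, by
            have ht' : (1:ℝ) ≤ t := by exact_mod_cast ht
            push_cast; linarith, ?_⟩
          intro i
          have hi := i.isLt
          rw [key]
          show _ ↔ i ∈ (tupleS t m a j).attachFin (hbound a j)
          rw [Finset.mem_attachFin]
          unfold tupleS
          rw [if_pos hjm]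
          simp only [Finset.mem_union, Finset.mem_Ico, Finset.mem_singleton]
          split_ifs with h1 h2 <;> (norm_cast <;> omega)
        · -- long tuple
          refine ⟨2 * n, 2 * (a : ℕ), 2 * t + 2 * (a : ℕ) + 2 * n, by
            have ht' : (1:ℝ) ≤ t := by exact_mod_cast ht
            push_cast; linarith, ?_⟩
          intro i
          have hi := i.isLt
          rw [key]
          show _ ↔ i ∈ (tupleS t m a j).attachFin (hbound a j)
          rw [Finset.mem_attachFin]
          unfold tupleS
          rw [if_neg hjm]
          simp only [Finset.mem_Ico]
          split_ifs with h1 h2 <;> (norm_cast <;> omega)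
    -- injectivity of G
    have hGinj : Function.Injective G := by
      rintro ⟨a, j⟩ ⟨a', j'⟩ hEq
      have ha := a.isLt
      have ha' := a'.isLt
      have hj := j.isLt
      have hj' := j'.isLt
      have hS : ∀ v, v < n → (v ∈ tupleS t m a j ↔ v ∈ tupleS t m a' j') := by
        intro v hv
        constructor
        · intro hvS
          have h1 : (⟨v, hv⟩ : Fin n) ∈ G (a, j) := (Finset.mem_attachFin _).mpr hvS
          rw [hEq] at h1
          exact (Finset.mem_attachFin _).mp h1
        · intro hvS
          have h1 : (⟨v, hv⟩ : Fin n) ∈ G (a', j') := (Finset.mem_attachFin _).mpr hvS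
          rw [← hEq] at h1
          exact (Finset.mem_attachFin _).mp h1
      have heq2 : (a : ℕ) = (a' : ℕ) ∧ (j : ℕ) = (j' : ℕ) := by
        by_cases hc : (j : ℕ) < m <;> by_cases hc' : (j' : ℕ) < m
        · have p1 := hS (2 * t + (j : ℕ)) (by omega)
          have p2 := hS (2 * t + (j' : ℕ)) (by omega)
          have p3 := hS ((a : ℕ) + 1) (by omega)
          have p4 := hS ((a' : ℕ) + 1) (by omega)
          simp only [tupleS, if_pos hc, if_pos hc', Finset.mem_union, Finset.mem_Ico,
            Finset.mem_singleton, or_true, true_or, iff_true, true_iff, le_refl, true_and] at p1 p2 p3 p4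
          omega
        · have p1 := hS (2 * t + (j : ℕ)) (by omega)
          simp only [tupleS, if_pos hc, if_neg hc', Finset.mem_union, Finset.mem_Ico,
            Finset.mem_singleton, or_true, true_or, iff_true, true_iff, le_refl, true_and] at p1
          omega
        · have p1 := hS (2 * t + (j' : ℕ)) (by omega)
          simp only [tupleS, if_neg hc, if_pos hc', Finset.mem_union, Finset.mem_Ico,
            Finset.mem_singleton, or_true, true_or, iff_true, true_iff, le_refl, true_and] at p1
          omega
        · have p3 := hS (a : ℕ) (by omega)
          have p4 := hS (a' : ℕ) (by omega)
          simp only [tupleS, if_neg hc, if_neg hc', Finset.mem_Ico, or_true, true_or, iff_true, true_iff, le_refl, true_and] at p3 p4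
          omega
      simp only [Prod.mk.injEq]
      exact ⟨Fin.ext heq2.1, Fin.ext heq2.2⟩
    -- conclude
    have hsub : Set.range G ⊆ {I : Finset (Fin n) | IsCanonical (famA t n) t I} := by
      rintro I ⟨p, rfl⟩
      exact hcanon p
    have hcard : (Set.range G).ncard = t * (m + 1) := by
      rw [← Nat.card_coe_set_eq, Nat.card_range_of_injective hGinj,
        Nat.card_eq_fintype_card]
      simp [Fintype.card_prod]
    have hle : (Set.range G).ncard ≤ {I : Finset (Fin n) | IsCanonical (famA t n) t I}.ncard :=
      Set.ncard_le_ncard hsub (Set.toFinite _)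
    omega
end

section
/- Let A be a multiset of n horizontal segments and B a multiset of m vertical segments in ℝ². If the bipartite intersection graph G(A,B) contains no complete bipartite subgraph K_{t,gt} (with the part of size t on the side of A), then G(A,B) has O(g·t²·n + t·m) edges. -/
open Finset

namespace HVZ

variable {α β : Type*} [DecidableEq α] [LinearOrder β]

/-- number of elements of `s` with key strictly above that of `a`. -/
def ab (κ : α → β) (s : Finset α) (a : α) : ℕ := (s.filter fun b => κ a < κ b).card

lemma ab_lt_card {κ : α → β} {s : Finset α} {a : α} (ha : a ∈ s) : ab κ s a < s.card := by
  have hsub : (s.filter fun b => κ a < κ b) ⊆ s.erase a := by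
    intro b hb
    simp only [mem_filter] at hb
    exact mem_erase.2 ⟨fun h => absurd hb.2 (by simp [h]), hb.1⟩
  calc ab κ s a ≤ (s.erase a).card := card_le_card hsub
    _ < s.card := by
        rw [card_erase_of_mem ha]
        exact Nat.sub_lt (card_pos.2 ⟨a, ha⟩) one_pos

lemma ab_anti {κ : α → β} {s : Finset α} {a b : α} (hb : b ∈ s) (hab : κ a < κ b) :
    ab κ s b < ab κ s a := by
  apply card_lt_card
  constructor
  · intro c hc
    simp only [mem_filter] at hc ⊢
    exact ⟨hc.1, hab.trans hc.2⟩
  · intro hsub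
    have : b ∈ s.filter fun c => κ b < κ c := hsub (by simp [hb, hab])
    simp at this

lemma ab_injOn {κ : α → β} (hκ : Function.Injective κ) (s : Finset α) :
    Set.InjOn (ab κ s) s := by
  intro a ha b hb hab
  by_contra hne
  rcases lt_trichotomy (κ a) (κ b) with h | h | h
  · exact absurd hab.symm (Nat.ne_of_lt (ab_anti hb h))
  · exact hne (hκ h)
  · exact absurd hab (Nat.ne_of_lt (ab_anti ha h))

lemma ab_compare {κ : α → β} {s : Finset α} {a b : α} {t : ℕ}
    (ha : a ∈ s) (hb : b ∈ s) (hta : t ≤ ab κ s a) (htb : ab κ s b < t) : κ a < κ b := by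
  rcases lt_trichotomy (κ a) (κ b) with h | h | h
  · exact h
  · exfalso
    have : ab κ s a = ab κ s b := by unfold ab; simp [h]
    omega
  · exact absurd (hta.trans_lt (ab_anti ha h)) (by omega)

lemma card_ab_filter {κ : α → β} (hκ : Function.Injective κ) (s : Finset α) (t : ℕ) :
    (s.filter fun a => ab κ s a < t).card = min t s.card := by
  classical
  have himg : s.image (ab κ s) = Finset.range s.card := by
    apply eq_of_subset_of_card_le
    · intro x hx
      obtain ⟨a, ha, rfl⟩ := mem_image.1 hx
      exact mem_range.2 (ab_lt_card ha)
    · rw [card_range, card_image_of_injOn (ab_injOn hκ s)]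
  have h1 : (s.filter fun a => ab κ s a < t).card
      = ((s.filter fun a => ab κ s a < t).image (ab κ s)).card := by
    rw [card_image_of_injOn ((ab_injOn hκ s).mono (filter_subset _ _))]
  rw [h1]
  have h2 : (s.filter fun a => ab κ s a < t).image (ab κ s)
      = (s.image (ab κ s)).filter fun x => x < t := by
    rw [filter_image]
  rw [h2, himg]
  have : (Finset.range s.card).filter (fun x => x < t) = Finset.range (min t s.card) := by
    ext x; simp [mem_filter, mem_range]; omega
  rw [this, card_range]

lemma card_ab_filter_le {κ : α → β} (hκ : Function.Injective κ) (s : Finset α) (t : ℕ) :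
    (s.filter fun a => ab κ s a < t).card ≤ t := by
  rw [card_ab_filter hκ s t]; exact min_le_left _ _

/-- If `#W < t` then `W = s` (all elements have rank `< t`). -/
lemma ab_filter_eq_self_of_card_lt {κ : α → β} (hκ : Function.Injective κ) {s : Finset α} {t : ℕ}
    (h : (s.filter fun a => ab κ s a < t).card < t) :
    s.filter (fun a => ab κ s a < t) = s := by
  have := card_ab_filter hκ s t
  apply eq_of_subset_of_card_le (filter_subset _ _)
  omega


/-! ### Geometry setup -/

variable {n m : ℕ}

/-- tie-breaking key for horizontal segments -/
def key (y : Fin n → ℝ) (i : Fin n) : ℝ ×ₗ Fin n := toLex (y i, i)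

lemma key_inj (y : Fin n → ℝ) : Function.Injective (key y) := by
  intro a b h
  have := congrArg (fun p => (ofLex p).2) h
  simpa [key] using this

lemma key_lt_of_y_lt {y : Fin n → ℝ} {a b : Fin n} (h : y a < y b) : key y a < key y b := by
  rw [key, key, Prod.Lex.lt_iff]
  exact Or.inl h

lemma y_le_of_key_le {y : Fin n → ℝ} {a b : Fin n} (h : key y a ≤ key y b) : y a ≤ y b := by
  rw [key, key, Prod.Lex.le_iff] at h
  rcases h with h | ⟨h, _⟩
  · exact le_of_lt h
  · exact le_of_eq h

lemma y_le_of_key_lt {y : Fin n → ℝ} {a b : Fin n} (h : key y a < key y b) : y a ≤ y b :=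
  y_le_of_key_le (le_of_lt h)

/-- the horizontal segments alive at sweep position `z`, below `i` in key order -/
noncomputable def Bel (xl xr y : Fin n → ℝ) (i : Fin n) (z : ℝ) : Finset (Fin n) :=
  univ.filter fun h => (xl h ≤ z ∧ z ≤ xr h) ∧ key y h < key y i

/-- top `t` elements (by key) of `Bel` -/
noncomputable def W (t : ℕ) (xl xr y : Fin n → ℝ) (i : Fin n) (z : ℝ) : Finset (Fin n) :=
  (Bel xl xr y i z).filter fun a => ab (key y) (Bel xl xr y i z) a < t

lemma W_subset_Bel {t : ℕ} {xl xr y : Fin n → ℝ} {i : Fin n} {z : ℝ} :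
    W t xl xr y i z ⊆ Bel xl xr y i z := filter_subset _ _

lemma W_card {t : ℕ} {xl xr y : Fin n → ℝ} {i : Fin n} {z : ℝ} :
    (W t xl xr y i z).card = min t (Bel xl xr y i z).card :=
  card_ab_filter (key_inj y) _ t

/-- elements of `Bel` outside `W` are below all of `W` -/
lemma key_lt_of_not_mem_W {t : ℕ} {xl xr y : Fin n → ℝ} {i : Fin n} {z : ℝ} {a w : Fin n}
    (ha : a ∈ Bel xl xr y i z) (hna : a ∉ W t xl xr y i z) (hw : w ∈ W t xl xr y i z) :
    key y a < key y w := by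
  rw [W, mem_filter] at hna hw
  have hta : t ≤ ab (key y) (Bel xl xr y i z) a := by
    rcases Nat.lt_or_ge (ab (key y) (Bel xl xr y i z) a) t with h | h
    · exact absurd ⟨ha, h⟩ hna
    · exact h
  exact ab_compare ha hw.1 hta hw.2

/-- the crossing relation -/
def Ed (xl xr y : Fin n → ℝ) (xv yb yt : Fin m → ℝ) (i : Fin n) (j : Fin m) : Prop :=
  xl i ≤ xv j ∧ xv j ≤ xr i ∧ yb j ≤ y i ∧ y i ≤ yt j

noncomputable instance (xl xr y : Fin n → ℝ) (xv yb yt : Fin m → ℝ) (i : Fin n) (j : Fin m) :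
    Decidable (Ed xl xr y xv yb yt i j) := by unfold Ed; infer_instance

/-- neighborhood of a vertical segment -/
noncomputable def Nb (xl xr y : Fin n → ℝ) (xv yb yt : Fin m → ℝ) (j : Fin m) : Finset (Fin n) :=
  univ.filter fun i => Ed xl xr y xv yb yt i j

/-- dual key, for counting *below* -/
def keyd (y : Fin n → ℝ) (i : Fin n) : (ℝ ×ₗ Fin n)ᵒᵈ := OrderDual.toDual (key y i)

lemma keyd_inj (y : Fin n → ℝ) : Function.Injective (keyd y) := fun a b h =>
  key_inj y (OrderDual.toDual.injective h)

lemma keyd_lt_iff {y : Fin n → ℝ} {a b : Fin n} : keyd y a < keyd y b ↔ key y b < key y a :=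
  Iff.rfl

/-- an edge `(i,j)` is deep if `j` has at least `t` neighbours strictly below `i` -/
noncomputable def deep (t : ℕ) (xl xr y : Fin n → ℝ) (xv yb yt : Fin m → ℝ) (i : Fin n) (j : Fin m) : Prop :=
  Ed xl xr y xv yb yt i j ∧ t ≤ ab (keyd y) (Nb xl xr y xv yb yt j) i

noncomputable instance (t : ℕ) (xl xr y : Fin n → ℝ) (xv yb yt : Fin m → ℝ) (i : Fin n) (j : Fin m) :
    Decidable (deep t xl xr y xv yb yt i j) := by unfold deep; infer_instance


section Geometry

variable {t : ℕ} {xl xr y : Fin n → ℝ} {xv yb yt : Fin m → ℝ}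

lemma mem_Bel_of_nb {i : Fin n} {j : Fin m} {b : Fin n}
    (hb : b ∈ Nb xl xr y xv yb yt j) (hlt : key y b < key y i) :
    b ∈ Bel xl xr y i (xv j) := by
  rw [Nb, mem_filter] at hb
  obtain ⟨-, h1, h2, -, -⟩ := hb
  exact mem_filter.2 ⟨mem_univ _, ⟨⟨h1, h2⟩, hlt⟩⟩

lemma BN_subset_Bel {i : Fin n} {j : Fin m} :
    ((Nb xl xr y xv yb yt j).filter fun b => key y b < key y i) ⊆ Bel xl xr y i (xv j) := by
  intro b hb
  rw [mem_filter] at hb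
  exact mem_Bel_of_nb hb.1 hb.2

lemma ab_keyd_eq {i : Fin n} {j : Fin m} :
    ab (keyd y) (Nb xl xr y xv yb yt j) i
      = ((Nb xl xr y xv yb yt j).filter fun b => key y b < key y i).card := by
  rw [ab]
  congr 1

lemma deep_t_le_card_Bel {i : Fin n} {j : Fin m}
    (hd : deep t xl xr y xv yb yt i j) : t ≤ (Bel xl xr y i (xv j)).card := by
  have h1 := hd.2
  rw [ab_keyd_eq] at h1
  exact h1.trans (card_le_card BN_subset_Bel)

lemma W_card_deep {i : Fin n} {j : Fin m}
    (hd : deep t xl xr y xv yb yt i j) : (W t xl xr y i (xv j)).card = t := by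
  rw [W_card, min_eq_left (deep_t_le_card_Bel hd)]

lemma W_subset_Nb {i : Fin n} {j : Fin m}
    (hd : deep t xl xr y xv yb yt i j) :
    W t xl xr y i (xv j) ⊆ Nb xl xr y xv yb yt j := by
  intro w hw
  have hwB : w ∈ Bel xl xr y i (xv j) := W_subset_Bel hw
  rw [Bel, mem_filter] at hwB
  obtain ⟨-, ⟨halx, halr⟩, hkey⟩ := hwB
  have hywi : y w ≤ y i := y_le_of_key_lt hkey
  have hEd := hd.1
  rw [Ed] at hEd
  -- find a below-neighbour of j with key ≤ key w
  have hBN : t ≤ ((Nb xl xr y xv yb yt j).filter fun b => key y b < key y i).card := by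
    rw [← ab_keyd_eq]; exact hd.2
  have hex : ∃ b ∈ (Nb xl xr y xv yb yt j).filter fun b => key y b < key y i,
      ¬ key y w < key y b := by
    by_contra hall
    push_neg at hall
    have hsub : ((Nb xl xr y xv yb yt j).filter fun b => key y b < key y i)
        ⊆ (Bel xl xr y i (xv j)).filter fun b => key y w < key y b := by
      intro b hb
      exact mem_filter.2 ⟨BN_subset_Bel hb, hall b hb⟩
    have : t ≤ ab (key y) (Bel xl xr y i (xv j)) w := hBN.trans (card_le_card hsub)
    rw [W, mem_filter] at hw
    omega
  obtain ⟨b, hbmem, hble⟩ := hex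
  rw [mem_filter] at hbmem
  have hyb : y b ≤ y w := y_le_of_key_le (not_lt.1 hble)
  have hbN := hbmem.1
  rw [Nb, mem_filter, Ed] at hbN
  rw [Nb, mem_filter]
  exact ⟨mem_univ _, halx, halr, hbN.2.2.2.1.trans hyb, hywi.trans hEd.2.2.2⟩

/-- at a fixed sweep position, at most `t` alive segments have `h` in their top-`t` window -/
lemma F_card_le (t : ℕ) (xl xr y : Fin n → ℝ) (h : Fin n) (z : ℝ) :
    (univ.filter fun i : Fin n => (xl i ≤ z ∧ z ≤ xr i) ∧ h ∈ W t xl xr y i z).card ≤ t := by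
  by_contra hc
  push_neg at hc
  obtain ⟨G, hGsub, hGcard⟩ := Finset.exists_subset_card_eq hc
  have hGne : G.Nonempty := by
    apply card_pos.1; omega
  obtain ⟨i0, hi0G, hi0max⟩ := Finset.exists_max_image G (key y) hGne
  have hi0F := hGsub hi0G
  rw [mem_filter] at hi0F
  have hsub : G.erase i0 ⊆ (Bel xl xr y i0 z).filter fun b => key y h < key y b := by
    intro i' hi'
    rw [mem_erase] at hi'
    have hi'F := hGsub hi'.2
    rw [mem_filter] at hi'F
    have hlt : key y i' < key y i0 :=
      lt_of_le_of_ne (hi0max _ hi'.2) (fun hk => hi'.1 (key_inj y hk))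
    have hhB : h ∈ Bel xl xr y i' z := W_subset_Bel hi'F.2.2
    rw [Bel, mem_filter] at hhB
    refine mem_filter.2 ⟨mem_filter.2 ⟨mem_univ _, ⟨hi'F.2.1, hlt⟩⟩, hhB.2.2⟩
  have h1 : t ≤ ab (key y) (Bel xl xr y i0 z) h := by
    have := card_le_card hsub
    rw [card_erase_of_mem hi0G, hGcard] at this
    rw [ab]
    omega
  have h2 := hi0F.2.2
  rw [W, mem_filter] at h2
  omega

end Geometry

/-! ### Chain / sweep machinery -/

section Chain

variable {γ : Type*} [DecidableEq γ]

/-- consecutive pairs of `S` (within ground set `Zi`) where `f` changes value -/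
noncomputable def PairsIn (f : ℝ → γ) (Zi S : Finset ℝ) : Finset (ℝ × ℝ) :=
  (Zi ×ˢ Zi).filter fun p =>
    p.1 ∈ S ∧ p.2 ∈ S ∧ p.1 < p.2 ∧ (∀ w ∈ Zi, ¬(p.1 < w ∧ w < p.2)) ∧ f p.1 ≠ f p.2

lemma PairsIn_mono (f : ℝ → γ) (Zi : Finset ℝ) {S S' : Finset ℝ} (h : S ⊆ S') :
    PairsIn f Zi S ⊆ PairsIn f Zi S' := by
  intro p hp
  rw [PairsIn, mem_filter] at hp ⊢
  exact ⟨hp.1, h hp.2.1, h hp.2.2.1, hp.2.2.2⟩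

lemma chain_bound (f : ℝ → γ) (Zi : Finset ℝ) (S : Finset ℝ) (hS : S ⊆ Zi)
    (hpre : ∀ s ∈ S, ∀ w ∈ Zi, w ∉ S → s < w) :
    (S.image f).card ≤ 1 + (PairsIn f Zi S).card := by
  classical
  induction S using Finset.induction_on_max with
  | empty => simp
  | insert a s ha ih =>
    have hanins : a ∉ s := fun h => lt_irrefl a (ha a h)
    have hsSub : s ⊆ Zi := fun x hx => hS (mem_insert_of_mem hx)
    have hspre : ∀ x ∈ s, ∀ w ∈ Zi, w ∉ s → x < w := by
      intro x hx w hw hwns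
      by_cases hwa : w = a
      · subst hwa; exact ha x hx
      · exact hpre x (mem_insert_of_mem hx) w hw (fun hwin => by
          rcases mem_insert.1 hwin with h | h
          · exact hwa h
          · exact hwns h)
    rcases s.eq_empty_or_nonempty with rfl | hne
    · simp
    · set b := s.max' hne with hbdef
      have hbmem : b ∈ s := s.max'_mem hne
      have hPmono : PairsIn f Zi s ⊆ PairsIn f Zi (insert a s) :=
        PairsIn_mono f Zi (subset_insert a s)
      rw [image_insert]
      by_cases hfab : f a = f b
      · have : f a ∈ s.image f := by
          rw [hfab]; exact mem_image_of_mem f hbmem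
        rw [insert_eq_self.2 this]
        calc (s.image f).card ≤ 1 + (PairsIn f Zi s).card := ih hsSub hspre
          _ ≤ 1 + (PairsIn f Zi (insert a s)).card := by
              exact Nat.add_le_add_left (card_le_card hPmono) 1
      · -- the pair (b, a) is a new changing consecutive pair
        have hba : (b, a) ∈ PairsIn f Zi (insert a s) := by
          rw [PairsIn, mem_filter]
          refine ⟨mem_product.2 ⟨hsSub hbmem, hS (mem_insert_self a s)⟩,
            mem_insert_of_mem hbmem, mem_insert_self a s, ha b hbmem, ?_, fun h => hfab h.symm⟩
          intro w hw ⟨hbw, hwa⟩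
          by_cases hwin : w ∈ insert a s
          · rcases mem_insert.1 hwin with rfl | hws
            · exact lt_irrefl w hwa
            · exact absurd (s.le_max' w hws) (not_le.2 hbw)
          · exact absurd (hpre a (mem_insert_self a s) w hw hwin) (not_lt.2 hwa.le)
        have hbanotin : (b, a) ∉ PairsIn f Zi s := by
          rw [PairsIn, mem_filter]
          rintro ⟨-, -, h2, -⟩
          exact hanins h2
        have hcard : (PairsIn f Zi s).card + 1 ≤ (PairsIn f Zi (insert a s)).card := by
          have : insert (b, a) (PairsIn f Zi s) ⊆ PairsIn f Zi (insert a s) := by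
            intro p hp
            rcases mem_insert.1 hp with rfl | hps
            · exact hba
            · exact hPmono hps
          have := card_le_card this
          rwa [card_insert_of_notMem hbanotin] at this
          
        calc (insert (f a) (s.image f)).card ≤ (s.image f).card + 1 :=
              card_insert_le _ _
          _ ≤ 1 + (PairsIn f Zi s).card + 1 := by
              exact Nat.add_le_add_right (ih hsSub hspre) 1
          _ ≤ 1 + (PairsIn f Zi (insert a s)).card := by omega

end Chain

section Dicho

variable {t : ℕ} {xl xr y : Fin n → ℝ} {xv : Fin m → ℝ}

/-- global set of event and query positions -/
noncomputable def Zg (xl xr : Fin n → ℝ) (xv : Fin m → ℝ) : Finset ℝ :=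
  (univ.image xl ∪ univ.image xr) ∪ univ.image xv

/-- positions relevant to segment `i` -/
noncomputable def Zint (xl xr : Fin n → ℝ) (xv : Fin m → ℝ) (i : Fin n) : Finset ℝ :=
  (Zg xl xr xv).filter fun z => xl i ≤ z ∧ z ≤ xr i

lemma dichotomy (i : Fin n) {p : ℝ × ℝ}
    (hp : p ∈ PairsIn (fun z => W t xl xr y i z) (Zint xl xr xv i) (Zint xl xr xv i)) :
    (∃ h, xr h = p.1 ∧ h ∈ W t xl xr y i p.1) ∨
    (∃ h, xl h = p.2 ∧ h ∈ W t xl xr y i p.2) := by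
  classical
  obtain ⟨z, z'⟩ := p
  rw [PairsIn, mem_filter] at hp
  obtain ⟨hmem, hz, hz', hlt, hbet, hne⟩ := hp
  simp only at hne hbet hlt ⊢
  rw [Zint, mem_filter] at hz hz'
  by_contra hcon
  push_neg at hcon
  obtain ⟨hnod, hnob⟩ := hcon
  -- Claim 1 : members of `W i z` are alive at `z'`
  have hC1 : ∀ w ∈ W t xl xr y i z, w ∈ Bel xl xr y i z' := by
    intro w hw
    have hwB := W_subset_Bel hw
    rw [Bel, mem_filter] at hwB
    obtain ⟨-, ⟨h1, h2⟩, h3⟩ := hwB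
    refine mem_filter.2 ⟨mem_univ _, ⟨⟨h1.trans hlt.le, ?_⟩, h3⟩⟩
    by_contra hxr
    push_neg at hxr
    have hxrZ : xr w ∈ Zint xl xr xv i := by
      rw [Zint, mem_filter, Zg]
      refine ⟨mem_union_left _ (mem_union_right _ (mem_image_of_mem xr (mem_univ w))), 
        hz.2.1.trans h2, le_of_lt (hxr.trans_le hz'.2.2)⟩
    rcases eq_or_lt_of_le h2 with heq | hltz
    · exact hnod w heq.symm hw
    · exact hbet (xr w) hxrZ ⟨hltz, hxr⟩
  -- Claim 2 : members of `W i z'` are alive at `z`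
  have hC2 : ∀ w ∈ W t xl xr y i z', w ∈ Bel xl xr y i z := by
    intro w hw
    have hwB := W_subset_Bel hw
    rw [Bel, mem_filter] at hwB
    obtain ⟨-, ⟨h1, h2⟩, h3⟩ := hwB
    refine mem_filter.2 ⟨mem_univ _, ⟨⟨?_, hlt.le.trans h2⟩, h3⟩⟩
    by_contra hxl
    push_neg at hxl
    have hxlZ : xl w ∈ Zint xl xr xv i := by
      rw [Zint, mem_filter, Zg]
      refine ⟨mem_union_left _ (mem_union_left _ (mem_image_of_mem xl (mem_univ w))),
        le_of_lt (hz.2.1.trans_lt hxl), h1.trans hz'.2.2⟩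
    rcases eq_or_lt_of_le h1 with heq | hltz
    · exact hnob w heq hw
    · exact hbet (xl w) hxlZ ⟨hxl, hltz⟩
  -- derive `W i z = W i z'`, contradiction
  apply hne
  by_cases hWzz' : ∃ w ∈ W t xl xr y i z, w ∉ W t xl xr y i z'
  · obtain ⟨w, hw, hwn⟩ := hWzz'
    by_cases hWz'z : ∃ w' ∈ W t xl xr y i z', w' ∉ W t xl xr y i z
    · obtain ⟨w', hw', hw'n⟩ := hWz'z
      have h1 : key y w < key y w' := key_lt_of_not_mem_W (hC1 w hw) hwn hw'
      have h2 : key y w' < key y w := key_lt_of_not_mem_W (hC2 w' hw') hw'n hw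
      exact absurd (h1.trans h2) (lt_irrefl _)
    · -- W z' ⊆ W z, strictly, so #W z' < t and W z' = Bel z'
      push_neg at hWz'z
      have hsub : W t xl xr y i z' ⊆ W t xl xr y i z := hWz'z
      have hss : W t xl xr y i z' ⊂ W t xl xr y i z := ⟨hsub, fun h => hwn (h hw)⟩
      have hcard : (W t xl xr y i z').card < t := by
        have h1 := card_lt_card hss
        have h2 : (W t xl xr y i z).card ≤ t := by rw [W_card]; exact min_le_left _ _
        omega
      have heq : W t xl xr y i z' = Bel xl xr y i z' :=
        ab_filter_eq_self_of_card_lt (key_inj y) hcard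
      exfalso
      exact hwn (heq ▸ hC1 w hw)
  · push_neg at hWzz'
    have hsub : W t xl xr y i z ⊆ W t xl xr y i z' := hWzz'
    rcases eq_or_ssubset_of_subset hsub with heq | hss
    · exact heq
    · exfalso
      obtain ⟨w', hw', hw'n⟩ := exists_of_ssubset hss
      have hcard : (W t xl xr y i z).card < t := by
        have h1 := card_lt_card hss
        have h2 : (W t xl xr y i z').card ≤ t := by rw [W_card]; exact min_le_left _ _
        omega
      have heq : W t xl xr y i z = Bel xl xr y i z :=
        ab_filter_eq_self_of_card_lt (key_inj y) hcard
      exact hw'n (heq ▸ hC2 w' hw')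

end Dicho

section Count

variable {t g : ℕ} {xl xr y : Fin n → ℝ} {xv yb yt : Fin m → ℝ}

noncomputable def Deaths (t : ℕ) (xl xr y : Fin n → ℝ) (i : Fin n) : Finset (Fin n) :=
  univ.filter fun h => (xl i ≤ xr h ∧ xr h ≤ xr i) ∧ h ∈ W t xl xr y i (xr h)

noncomputable def Births (t : ℕ) (xl xr y : Fin n → ℝ) (i : Fin n) : Finset (Fin n) :=
  univ.filter fun h => (xl i ≤ xl h ∧ xl h ≤ xr i) ∧ h ∈ W t xl xr y i (xl h)

lemma pairs_card_le (i : Fin n) :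
    (PairsIn (fun z => W t xl xr y i z) (Zint xl xr xv i) (Zint xl xr xv i)).card
      ≤ (Deaths t xl xr y i).card + (Births t xl xr y i).card := by
  classical
  set f : ℝ → Finset (Fin n) := fun z => W t xl xr y i z with hf
  set Zi := Zint xl xr xv i with hZi
  set P := PairsIn f Zi Zi with hP
  set Pd := P.filter (fun p => ∃ h, xr h = p.1 ∧ h ∈ W t xl xr y i p.1) with hPd
  set Pb := P.filter (fun p => ∃ h, xl h = p.2 ∧ h ∈ W t xl xr y i p.2) with hPb
  have hsub : P ⊆ Pd ∪ Pb := by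
    intro p hp
    rcases dichotomy (xv := xv) i hp with h | h
    · exact mem_union_left _ (mem_filter.2 ⟨hp, h⟩)
    · exact mem_union_right _ (mem_filter.2 ⟨hp, h⟩)
  have hPdcard : Pd.card ≤ (Deaths t xl xr y i).card := by
    have hinj : Set.InjOn Prod.fst (Pd : Set (ℝ × ℝ)) := by
      intro p hp q hq hpq
      simp only [hPd, hP, PairsIn, mem_coe, mem_filter] at hp hq
      obtain ⟨⟨-, hp1, hp2, hplt, hpbet, -⟩, -⟩ := hp
      obtain ⟨⟨-, hq1, hq2, hqlt, hqbet, -⟩, -⟩ := hq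
      rcases lt_trichotomy p.2 q.2 with h | h | h
      · exfalso; exact hqbet p.2 hp2 ⟨hpq ▸ hplt, h⟩
      · exact Prod.ext hpq h
      · exfalso; exact hpbet q.2 hq2 ⟨hpq.symm ▸ hqlt, h⟩
    calc Pd.card = (Pd.image Prod.fst).card := (card_image_of_injOn hinj).symm
      _ ≤ ((Deaths t xl xr y i).image xr).card := by
          apply card_le_card
          intro z hz
          obtain ⟨p, hp, rfl⟩ := mem_image.1 hz
          rw [hPd, mem_filter] at hp
          obtain ⟨hpP, h, hh1, hh2⟩ := hp
          rw [hP, PairsIn, mem_filter] at hpP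
          have hp1Z : p.1 ∈ Zi := hpP.2.1
          rw [hZi, Zint, mem_filter] at hp1Z
          apply mem_image.2
          exact ⟨h, mem_filter.2 ⟨mem_univ _, ⟨⟨hh1 ▸ hp1Z.2.1, hh1 ▸ hp1Z.2.2⟩, hh1 ▸ hh2⟩⟩, hh1⟩
      _ ≤ (Deaths t xl xr y i).card := card_image_le
  have hPbcard : Pb.card ≤ (Births t xl xr y i).card := by
    have hinj : Set.InjOn Prod.snd (Pb : Set (ℝ × ℝ)) := by
      intro p hp q hq hpq
      simp only [hPb, hP, PairsIn, mem_coe, mem_filter] at hp hq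
      obtain ⟨⟨-, hp1, hp2, hplt, hpbet, -⟩, -⟩ := hp
      obtain ⟨⟨-, hq1, hq2, hqlt, hqbet, -⟩, -⟩ := hq
      rcases lt_trichotomy p.1 q.1 with h | h | h
      · exfalso; exact hpbet q.1 hq1 ⟨h, hpq.symm ▸ hqlt⟩
      · exact Prod.ext h hpq
      · exfalso; exact hqbet p.1 hp1 ⟨h, hpq ▸ hplt⟩
    calc Pb.card = (Pb.image Prod.snd).card := (card_image_of_injOn hinj).symm
      _ ≤ ((Births t xl xr y i).image xl).card := by
          apply card_le_card
          intro z hz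
          obtain ⟨p, hp, rfl⟩ := mem_image.1 hz
          rw [hPb, mem_filter] at hp
          obtain ⟨hpP, h, hh1, hh2⟩ := hp
          rw [hP, PairsIn, mem_filter] at hpP
          have hp2Z : p.2 ∈ Zi := hpP.2.2.1
          rw [hZi, Zint, mem_filter] at hp2Z
          apply mem_image.2
          exact ⟨h, mem_filter.2 ⟨mem_univ _, ⟨⟨hh1 ▸ hp2Z.2.1, hh1 ▸ hp2Z.2.2⟩, hh1 ▸ hh2⟩⟩, hh1⟩
      _ ≤ (Births t xl xr y i).card := card_image_le
  calc P.card ≤ (Pd ∪ Pb).card := card_le_card hsub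
    _ ≤ Pd.card + Pb.card := card_union_le _ _
    _ ≤ _ := Nat.add_le_add hPdcard hPbcard

end Count

section Assemble

variable {t g : ℕ} {xl xr y : Fin n → ℝ} {xv yb yt : Fin m → ℝ}

/-- the deep verticals of a horizontal segment `i` -/
noncomputable def DJ (t : ℕ) (xl xr y : Fin n → ℝ) (xv yb yt : Fin m → ℝ) (i : Fin n) :
    Finset (Fin m) := univ.filter fun j => deep t xl xr y xv yb yt i j

lemma vals_card_le (i : Fin n) :
    ((DJ t xl xr y xv yb yt i).image (fun j => W t xl xr y i (xv j))).card
      ≤ 1 + ((Deaths t xl xr y i).card + (Births t xl xr y i).card) := by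
  classical
  have hsub : (DJ t xl xr y xv yb yt i).image (fun j => W t xl xr y i (xv j))
      ⊆ (Zint xl xr xv i).image (fun z => W t xl xr y i z) := by
    intro S hS
    obtain ⟨j, hj, rfl⟩ := mem_image.1 hS
    rw [DJ, mem_filter] at hj
    have hEd := hj.2.1
    rw [Ed] at hEd
    apply mem_image_of_mem
    rw [Zint, mem_filter, Zg]
    exact ⟨mem_union_right _ (mem_image_of_mem xv (mem_univ j)), hEd.1, hEd.2.1⟩
  have hchain := chain_bound (fun z => W t xl xr y i z) (Zint xl xr xv i) (Zint xl xr xv i)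
    (Finset.Subset.refl _) (fun s _ w _ hw => absurd hw (by simp_all))
  calc ((DJ t xl xr y xv yb yt i).image (fun j => W t xl xr y i (xv j))).card
      ≤ ((Zint xl xr xv i).image (fun z => W t xl xr y i z)).card := card_le_card hsub
    _ ≤ 1 + (PairsIn (fun z => W t xl xr y i z) (Zint xl xr xv i) (Zint xl xr xv i)).card :=
        hchain
    _ ≤ 1 + ((Deaths t xl xr y i).card + (Births t xl xr y i).card) :=
        Nat.add_le_add_left (pairs_card_le i) 1

lemma DJ_card_le
    (hfree : ∀ (S : Finset (Fin n)) (T : Finset (Fin m)), S.card = t → T.card = g * t →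
      ¬ ∀ i ∈ S, ∀ j ∈ T, Ed xl xr y xv yb yt i j) (i : Fin n) :
    (DJ t xl xr y xv yb yt i).card
      ≤ (g * t) * (1 + ((Deaths t xl xr y i).card + (Births t xl xr y i).card)) := by
  classical
  set Vals := (DJ t xl xr y xv yb yt i).image (fun j => W t xl xr y i (xv j)) with hVals
  have hfib : ∀ S ∈ Vals,
      ((DJ t xl xr y xv yb yt i).filter fun j => W t xl xr y i (xv j) = S).card ≤ g * t := by
    intro S hSV
    by_contra hbig
    push_neg at hbig
    obtain ⟨T, hTsub, hTcard⟩ := Finset.exists_subset_card_eq hbig.le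
    obtain ⟨j0, hj0⟩ := mem_image.1 hSV
    have hj0DJ : j0 ∈ DJ t xl xr y xv yb yt i := hj0.1
    rw [DJ, mem_filter] at hj0DJ
    have hScard : S.card = t := by
      rw [← hj0.2]
      exact W_card_deep hj0DJ.2
    apply hfree S T hScard hTcard
    intro w hw j hj
    have hjT := hTsub hj
    rw [mem_filter] at hjT
    have hjDJ := hjT.1
    rw [DJ, mem_filter] at hjDJ
    have hwW : w ∈ W t xl xr y i (xv j) := by rw [hjT.2]; exact hw
    have := W_subset_Nb hjDJ.2 hwW
    rw [Nb, mem_filter] at this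
    exact this.2
  calc (DJ t xl xr y xv yb yt i).card
      = ∑ S ∈ Vals, ((DJ t xl xr y xv yb yt i).filter fun j => W t xl xr y i (xv j) = S).card :=
        card_eq_sum_card_fiberwise (fun j hj => mem_image_of_mem _ hj)
    _ ≤ ∑ _S ∈ Vals, g * t := Finset.sum_le_sum hfib
    _ = Vals.card * (g * t) := by rw [Finset.sum_const, smul_eq_mul]
    _ ≤ (1 + ((Deaths t xl xr y i).card + (Births t xl xr y i).card)) * (g * t) := by
        exact Nat.mul_le_mul_right _ (vals_card_le i)
    _ = (g * t) * (1 + ((Deaths t xl xr y i).card + (Births t xl xr y i).card)) := by ring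

lemma sum_card_swap {c : Fin n → Fin n → Prop} [∀ i h, Decidable (c i h)] :
    ∑ i, (univ.filter fun h => c i h).card = ∑ h, (univ.filter fun i => c i h).card := by
  simp only [card_filter]
  exact Finset.sum_comm

lemma sum_deaths_le : ∑ i, (Deaths t xl xr y i).card ≤ t * n := by
  have h1 : ∑ i, (Deaths t xl xr y i).card
      = ∑ h, (univ.filter fun i : Fin n =>
          (xl i ≤ xr h ∧ xr h ≤ xr i) ∧ h ∈ W t xl xr y i (xr h)).card := by
    simp only [Deaths]
    exact sum_card_swap
  rw [h1]
  calc ∑ h : Fin n, (univ.filter fun i : Fin n =>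
          (xl i ≤ xr h ∧ xr h ≤ xr i) ∧ h ∈ W t xl xr y i (xr h)).card
      ≤ ∑ _h : Fin n, t := Finset.sum_le_sum (fun h _ => F_card_le t xl xr y h (xr h))
    _ = t * n := by simp [mul_comm]

lemma sum_births_le : ∑ i, (Births t xl xr y i).card ≤ t * n := by
  have h1 : ∑ i, (Births t xl xr y i).card
      = ∑ h, (univ.filter fun i : Fin n =>
          (xl i ≤ xl h ∧ xl h ≤ xr i) ∧ h ∈ W t xl xr y i (xl h)).card := by
    simp only [Births]
    exact sum_card_swap
  rw [h1]
  calc ∑ h : Fin n, (univ.filter fun i : Fin n =>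
          (xl i ≤ xl h ∧ xl h ≤ xr i) ∧ h ∈ W t xl xr y i (xl h)).card
      ≤ ∑ _h : Fin n, t := Finset.sum_le_sum (fun h _ => F_card_le t xl xr y h (xl h))
    _ = t * n := by simp [mul_comm]

end Assemble

lemma sum_card_swap' {c : Fin n → Fin m → Prop} [∀ i j, Decidable (c i j)] :
    ∑ j, (univ.filter fun i => c i j).card = ∑ i, (univ.filter fun j => c i j).card := by
  simp only [card_filter]
  exact Finset.sum_comm

theorem aux_bound {n m : ℕ} (t g : ℕ) (ht : 1 ≤ t) (hg : 1 ≤ g)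
    (xl xr y : Fin n → ℝ) (xv yb yt : Fin m → ℝ)
    (hfree : ∀ (S : Finset (Fin n)) (T : Finset (Fin m)), S.card = t → T.card = g * t →
      ¬ ∀ i ∈ S, ∀ j ∈ T, Ed xl xr y xv yb yt i j) :
    (univ.filter fun p : Fin n × Fin m => Ed xl xr y xv yb yt p.1 p.2).card
      ≤ 3 * (g * t ^ 2 * n + t * m) := by
  classical
  have hcount : (univ.filter fun p : Fin n × Fin m => Ed xl xr y xv yb yt p.1 p.2).card
      = ∑ j, (Nb xl xr y xv yb yt j).card := by
    simp only [card_filter, Nb]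
    rw [Fintype.sum_prod_type]
    exact Finset.sum_comm
  have hperj : ∀ j, (Nb xl xr y xv yb yt j).card
      ≤ t + (univ.filter fun i => deep t xl xr y xv yb yt i j).card := by
    intro j
    have hsplit := card_filter_add_card_filter_not
      (s := Nb xl xr y xv yb yt j) (p := fun i => ab (keyd y) (Nb xl xr y xv yb yt j) i < t)
    have hshallow : ((Nb xl xr y xv yb yt j).filter
        (fun i => ab (keyd y) (Nb xl xr y xv yb yt j) i < t)).card ≤ t :=
      card_ab_filter_le (keyd_inj y) _ t
    have hdeepeq : (Nb xl xr y xv yb yt j).filter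
        (fun i => ¬ (ab (keyd y) (Nb xl xr y xv yb yt j) i < t))
        = univ.filter fun i => deep t xl xr y xv yb yt i j := by
      ext i
      simp only [mem_filter, Nb, mem_univ, true_and, not_lt, deep]
      exact ⟨fun h => mem_filter.2 ⟨mem_univ _, h⟩, fun h => (mem_filter.1 h).2⟩
    rw [hdeepeq] at hsplit
    omega
  have hswap : ∑ j, (univ.filter fun i => deep t xl xr y xv yb yt i j).card
      = ∑ i, (DJ t xl xr y xv yb yt i).card := by
    simp only [DJ]
    exact sum_card_swap'
  have hDJ : ∑ i, (DJ t xl xr y xv yb yt i).card ≤ 3 * (g * t ^ 2 * n) := by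
    have h1 : ∑ i, (DJ t xl xr y xv yb yt i).card
        ≤ ∑ i, (g * t) * (1 + ((Deaths t xl xr y i).card + (Births t xl xr y i).card)) :=
      Finset.sum_le_sum (fun i _ => DJ_card_le hfree i)
    have h2 : ∑ i, (g * t) * (1 + ((Deaths t xl xr y i).card + (Births t xl xr y i).card))
        = (g * t) * (n + (∑ i, (Deaths t xl xr y i).card + ∑ i, (Births t xl xr y i).card)) := by
      rw [← Finset.mul_sum]
      congr 1
      rw [Finset.sum_add_distrib, Finset.sum_add_distrib, Finset.sum_const, card_univ]
      simp [Fintype.card_fin]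
    have h3 : ∑ i, (Deaths t xl xr y i).card ≤ t * n := sum_deaths_le
    have h4 : ∑ i, (Births t xl xr y i).card ≤ t * n := sum_births_le
    have h5 : n + (∑ i, (Deaths t xl xr y i).card + ∑ i, (Births t xl xr y i).card)
        ≤ 3 * (t * n) := by
      have hn : n ≤ t * n := Nat.le_mul_of_pos_left n ht
      omega
    have h6 : (g * t) * (3 * (t * n)) = 3 * (g * t ^ 2 * n) := by ring
    calc ∑ i, (DJ t xl xr y xv yb yt i).card
        ≤ (g * t) * (n + (∑ i, (Deaths t xl xr y i).card + ∑ i, (Births t xl xr y i).card)) :=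
          h2 ▸ h1
      _ ≤ (g * t) * (3 * (t * n)) := Nat.mul_le_mul_left _ h5
      _ = 3 * (g * t ^ 2 * n) := h6
  calc (univ.filter fun p : Fin n × Fin m => Ed xl xr y xv yb yt p.1 p.2).card
      = ∑ j, (Nb xl xr y xv yb yt j).card := hcount
    _ ≤ ∑ j : Fin m, (t + (univ.filter fun i => deep t xl xr y xv yb yt i j).card) :=
        Finset.sum_le_sum (fun j _ => hperj j)
    _ = t * m + ∑ j, (univ.filter fun i => deep t xl xr y xv yb yt i j).card := by
        rw [Finset.sum_add_distrib, Finset.sum_const, card_univ]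
        simp [Fintype.card_fin, mul_comm]
    _ = t * m + ∑ i, (DJ t xl xr y xv yb yt i).card := by rw [hswap]
    _ ≤ t * m + 3 * (g * t ^ 2 * n) := Nat.add_le_add_left hDJ _
    _ ≤ 3 * (g * t ^ 2 * n + t * m) := by omega

end HVZ

open Finset in
/-- Zarankiewicz bound for horizontal vs. vertical segments: if the bipartite
intersection graph of `n` horizontal and `m` vertical segments contains no
`K_{t,gt}` (`t` on the horizontal side), it has `O(g t² n + t m)` edges. -/
theorem horiz_vert_zarankiewicz :
    ∃ C : ℕ, ∀ (n m t g : ℕ), 1 ≤ t → 1 ≤ g →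
      ∀ (A : Fin n → Set (ℝ × ℝ)) (B : Fin m → Set (ℝ × ℝ)),
      (∀ i, ∃ xl xr y : ℝ, xl ≤ xr ∧ A i = horizSeg xl xr y) →
      (∀ j, ∃ x yb yt : ℝ, yb ≤ yt ∧ B j = vertSeg x yb yt) →
      (¬ ∃ (S : Finset (Fin n)) (T : Finset (Fin m)), S.card = t ∧ T.card = g * t ∧
          ∀ i ∈ S, ∀ j ∈ T, (A i ∩ B j).Nonempty) →
      {p : Fin n × Fin m | (A p.1 ∩ B p.2).Nonempty}.ncard
        ≤ C * (g * t ^ 2 * n + t * m) := by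
  classical
  refine ⟨3, ?_⟩
  intro n m t g ht hg A B hA hB hK
  choose xl xr y hxlr hAe using hA
  choose xv yb yt hybt hBe using hB
  have hiff : ∀ i j, (A i ∩ B j).Nonempty ↔ HVZ.Ed xl xr y xv yb yt i j := by
    intro i j
    rw [hAe i, hBe j]
    unfold HVZ.Ed horizSeg vertSeg
    constructor
    · rintro ⟨p, hpA, hpB⟩
      simp only [Set.mem_prod, Set.mem_Icc, Set.mem_singleton_iff] at hpA hpB
      obtain ⟨⟨h1, h2⟩, h3⟩ := hpA
      obtain ⟨h4, h5, h6⟩ := hpB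
      rw [h3] at h5 h6
      rw [h4] at h1 h2
      exact ⟨h1, h2, h5, h6⟩
    · rintro ⟨h1, h2, h3, h4⟩
      refine ⟨(xv j, y i), ?_, ?_⟩ <;>
        refine Set.mem_prod.2 ⟨?_, ?_⟩ <;>
        simp [Set.mem_Icc, h1, h2, h3, h4]
  have hset : {p : Fin n × Fin m | (A p.1 ∩ B p.2).Nonempty}
      = ↑(univ.filter fun p : Fin n × Fin m => HVZ.Ed xl xr y xv yb yt p.1 p.2) := by
    ext p
    simp only [Set.mem_setOf_eq, coe_filter, mem_univ, true_and, Set.mem_setOf_eq]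
    exact hiff p.1 p.2
  rw [hset, Set.ncard_coe_finset]
  apply HVZ.aux_bound t g ht hg
  intro S T hS hT hall
  exact hK ⟨S, T, hS, hT, fun i hi j hj => (hiff i j).2 (hall i hi j hj)⟩
end

section
/- Let P be a multiset of n points in ℝ² and B a multiset of m bottomless rectangles. If the bipartite intersection graph G(P,B) is K_{t,gt}-free (t on the side of P), then it has O(g·t²·n + t·m) edges; and if it is K_{gt,t}-free (t on the side of B), then it has O(g·t²·m + t·n) edges. -/
set_option linter.unusedSectionVars false
set_option linter.unusedVariables false
set_option maxHeartbeats 2000000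

/-- The bottomless rectangle `{(x,y) : a ≤ x ≤ b, y ≤ c}`. -/
def bottomless (a b c : ℝ) : Set (ℝ × ℝ) := {p : ℝ × ℝ | a ≤ p.1 ∧ p.1 ≤ b ∧ p.2 ≤ c}

open Finset

namespace ZarAux


variable {α κ : Type*} [LinearOrder κ] [DecidableEq α]

/-- number of elements of `F` strictly `f`-below `x`. -/
def lowRank (F : Finset α) (f : α → κ) (x : α) : ℕ := (F.filter fun y => f y < f x).card

/-- the `k` lowest elements of `F` w.r.t. `f`. -/
def botk (F : Finset α) (f : α → κ) (k : ℕ) : Finset α := F.filter fun x => lowRank F f x < k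

variable {F D : Finset α} {f : α → κ} {x y : α} {k : ℕ}

lemma botk_subset : botk F f k ⊆ F := filter_subset _ _

lemma mem_botk : x ∈ botk F f k ↔ x ∈ F ∧ lowRank F f x < k := mem_filter

lemma lowRank_lt_of_lt (hx : x ∈ F) (h : f x < f y) : lowRank F f x < lowRank F f y := by
  apply card_lt_card
  constructor
  · intro z hz
    rw [mem_filter] at hz ⊢
    exact ⟨hz.1, hz.2.trans h⟩
  · intro hsub
    have := hsub (mem_filter.2 ⟨hx, h⟩)
    simp at this

lemma lowRank_injOn (hf : Function.Injective f) (hx : x ∈ F) (hy : y ∈ F)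
    (h : lowRank F f x = lowRank F f y) : x = y := by
  rcases lt_trichotomy (f x) (f y) with hl | he | hl
  · exact absurd h (Nat.ne_of_lt (lowRank_lt_of_lt hx hl))
  · exact hf he
  · exact absurd h.symm (Nat.ne_of_lt (lowRank_lt_of_lt hy hl))

lemma lowRank_lt_card (hx : x ∈ F) : lowRank F f x < F.card := by
  have : (F.filter fun y => f y < f x) ⊆ F.erase x := by
    intro z hz
    rw [mem_filter] at hz
    rw [mem_erase]
    exact ⟨fun hzx => by simp [hzx] at hz, hz.1⟩
  calc lowRank F f x ≤ (F.erase x).card := card_le_card this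
    _ < F.card := by
        have := card_erase_lt_of_mem hx
        exact this

lemma image_lowRank (hf : Function.Injective f) :
    F.image (lowRank F f) = range F.card := by
  apply eq_of_subset_of_card_le
  · intro v hv
    rw [mem_image] at hv
    obtain ⟨x, hx, rfl⟩ := hv
    exact mem_range.2 (lowRank_lt_card hx)
  · rw [card_range, card_image_of_injOn (fun x hx y hy h => lowRank_injOn hf hx hy h)]

lemma botk_card (hf : Function.Injective f) :
    (botk F f k).card = min k F.card := by
  have h1 : (botk F f k).image (lowRank F f) = (F.image (lowRank F f)).filter (fun v => v < k) := by
    rw [filter_image]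
    rfl
  have h2 : (botk F f k).card = ((F.image (lowRank F f)).filter (fun v => v < k)).card := by
    rw [← h1]
    rw [card_image_of_injOn]
    intro a ha b hb hab
    exact lowRank_injOn hf (botk_subset ha) (botk_subset hb) hab
  rw [h2, image_lowRank hf]
  have : (range F.card).filter (fun v => v < k) = range (min k F.card) := by
    ext v; simp [mem_filter, mem_range]; omega
  rw [this, card_range]

lemma botk_card_le (hf : Function.Injective f) : (botk F f k).card ≤ k := by
  rw [botk_card hf]; exact Nat.min_le_left _ _

lemma botk_card_eq (hf : Function.Injective f) (hk : k ≤ F.card) : (botk F f k).card = k := by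
  rw [botk_card hf]; omega

/-- a down-closed subset of `F` of size `≥ k` contains `botk F f k`. -/
lemma botk_subset_downclosed (hf : Function.Injective f) (hD : D ⊆ F)
    (hdc : ∀ d ∈ D, ∀ z ∈ F, f z < f d → z ∈ D) (hcard : k ≤ D.card) :
    botk F f k ⊆ D := by
  intro x hx
  rw [mem_botk] at hx
  by_contra hxD
  have hsub : D ⊆ F.filter fun y => f y < f x := by
    intro d hd
    rw [mem_filter]
    refine ⟨hD hd, ?_⟩
    rcases lt_trichotomy (f d) (f x) with h | h | h
    · exact h
    · exact absurd (hf h) (fun e => hxD (e ▸ hd))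
    · exact absurd (hdc d hd x hx.1 h) hxD
  have := card_le_card hsub
  have := hx.2
  unfold lowRank at *
  omega

/-- if `F` and `F'` agree strictly below `ρ` with at least `k` elements there,
then `botk` agree. -/
lemma botk_congr (hf : Function.Injective f) {F' : Finset α} {ρ : κ}
    (hag : F.filter (fun z => f z < ρ) = F'.filter (fun z => f z < ρ))
    (hk : k ≤ (F.filter (fun z => f z < ρ)).card) :
    botk F f k = botk F' f k := by
  have key : ∀ (G : Finset α), k ≤ (G.filter (fun z => f z < ρ)).card →
      botk G f k = botk (G.filter (fun z => f z < ρ)) f k := by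
    intro G hkG
    have hsb : botk G f k ⊆ G.filter (fun z => f z < ρ) := by
      intro x hx
      rw [mem_botk] at hx
      rw [mem_filter]
      refine ⟨hx.1, ?_⟩
      by_contra hge
      push_neg at hge
      have hsub : G.filter (fun z => f z < ρ) ⊆ G.filter fun y => f y < f x := by
        intro z hz
        rw [mem_filter] at hz ⊢
        exact ⟨hz.1, lt_of_lt_of_le hz.2 hge⟩
      have := card_le_card hsub
      have := hx.2
      unfold lowRank at *
      omega
    have hrk : ∀ x ∈ G.filter (fun z => f z < ρ),
        lowRank G f x = lowRank (G.filter (fun z => f z < ρ)) f x := by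
      intro x hx
      rw [mem_filter] at hx
      unfold lowRank
      congr 1
      ext z
      simp only [mem_filter]
      constructor
      · rintro ⟨h1, h2⟩; exact ⟨⟨h1, h2.trans hx.2⟩, h2⟩
      · rintro ⟨⟨h1, _⟩, h2⟩; exact ⟨h1, h2⟩
    ext x
    constructor
    · intro hx
      have hxf := hsb hx
      rw [mem_botk] at hx ⊢
      rw [← hrk x hxf]
      exact ⟨hxf, hx.2⟩
    · intro hx
      rw [mem_botk] at hx
      have hxf := hx.1
      rw [mem_botk]
      rw [mem_filter] at hxf
      refine ⟨hxf.1, ?_⟩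
      rw [hrk x hx.1]
      exact hx.2
  rw [key F hk, key F' (hag ▸ hk), hag]

/-- removing the minimum shifts `botk`. -/
lemma botk_erase_min (hf : Function.Injective f) {μ : α} (hμF : μ ∈ F)
    (hμ : ∀ z ∈ F, f μ ≤ f z) (hk : 1 ≤ k) :
    botk F f k = insert μ (botk (F.erase μ) f (k - 1)) := by
  have hlrμ : lowRank F f μ = 0 := by
    unfold lowRank
    rw [card_eq_zero]
    rw [filter_eq_empty_iff]
    intro z hz
    exact not_lt.2 (hμ z hz)
  have hlr : ∀ x ∈ F, x ≠ μ → lowRank F f x = lowRank (F.erase μ) f x + 1 := by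
    intro x hxF hxμ
    unfold lowRank
    have : F.filter (fun y => f y < f x) = insert μ ((F.erase μ).filter (fun y => f y < f x)) := by
      ext z
      simp only [mem_filter, mem_insert, mem_erase]
      constructor
      · rintro ⟨hz, hlt⟩
        by_cases hzμ : z = μ
        · exact Or.inl hzμ
        · exact Or.inr ⟨⟨hzμ, hz⟩, hlt⟩
      · rintro (rfl | ⟨⟨_, hz⟩, hlt⟩)
        · refine ⟨hμF, ?_⟩
          rcases lt_or_eq_of_le (hμ x hxF) with h | h
          · exact h
          · exact absurd (hf h) (fun e => hxμ e.symm)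
        · exact ⟨hz, hlt⟩
    rw [this, card_insert_of_notMem]
    simp only [mem_filter, mem_erase]
    rintro ⟨⟨h, _⟩, _⟩
    exact h rfl
  ext x
  simp only [mem_botk, mem_insert]
  constructor
  · rintro ⟨hxF, hlt⟩
    by_cases hxμ : x = μ
    · exact Or.inl hxμ
    · right
      refine ⟨mem_erase.2 ⟨hxμ, hxF⟩, ?_⟩
      rw [hlr x hxF hxμ] at hlt
      omega
  · rintro (rfl | ⟨hxe, hlt⟩)
    · exact ⟨hμF, by omega⟩
    · rw [mem_erase] at hxe
      refine ⟨hxe.2, ?_⟩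
      rw [hlr x hxe.2 hxe.1]
      omega

end ZarAux

namespace ZarAux


variable {α β : Type*} [LinearOrder α] [DecidableEq β]

/-- the successor of `u` within `C` (or `u` itself if none). -/
noncomputable def nextIn (C : Finset α) (u : α) : α :=
  if h : (C.filter (fun v => u < v)).Nonempty then (C.filter (fun v => u < v)).min' h else u

lemma nextIn_spec {C : Finset α} {u : α} (h : (C.filter (fun v => u < v)).Nonempty) :
    nextIn C u ∈ C ∧ u < nextIn C u ∧ ∀ z ∈ C, u < z → nextIn C u ≤ z := by
  rw [nextIn, dif_pos h]
  have hm := min'_mem _ h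
  rw [mem_filter] at hm
  exact ⟨hm.1, hm.2, fun z hz huz => min'_le _ _ (mem_filter.2 ⟨hz, huz⟩)⟩

lemma nextIn_eq_self {C : Finset α} {u : α} (h : ¬ (C.filter (fun v => u < v)).Nonempty) :
    nextIn C u = u := dif_neg h

/-- number of distinct values of `f` on a finite chain is at most 1 + number of
positions where the value changes to the successor. -/
lemma image_card_le_changes (C : Finset α) (f : α → β) :
    (C.image f).card ≤ 1 + (C.filter (fun u => nextIn C u ≠ u ∧ f u ≠ f (nextIn C u))).card := by
  classical
  induction C using Finset.strongInductionOn with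
  | _ C ih =>
    rcases C.eq_empty_or_nonempty with rfl | hne
    · simp
    set μ := C.min' hne with hμdef
    have hμC : μ ∈ C := min'_mem _ _
    set C' := C.erase μ with hC'def
    have hCC' : C = insert μ C' := by
      rw [hC'def, insert_erase hμC]
    have hssub : C' ⊂ C := erase_ssubset hμC
    have hfiltagree : ∀ u, u ∈ C' → C'.filter (fun v => u < v) = C.filter (fun v => u < v) := by
      intro u hu
      ext z
      simp only [mem_filter, hC'def, mem_erase]
      constructor
      · rintro ⟨⟨_, hz⟩, hlt⟩; exact ⟨hz, hlt⟩
      · rintro ⟨hz, hlt⟩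
        have hμu : μ ≤ u := min'_le _ _ (mem_of_mem_erase hu)
        exact ⟨⟨fun e => absurd (e ▸ (hμu.trans_lt hlt)) (lt_irrefl _), hz⟩, hlt⟩
    have hnext_agree : ∀ u ∈ C', nextIn C' u = nextIn C u := by
      intro u hu
      rw [nextIn, nextIn, hfiltagree u hu]
    have hchsub : C'.filter (fun u => nextIn C' u ≠ u ∧ f u ≠ f (nextIn C' u)) ⊆
        C.filter (fun u => nextIn C u ≠ u ∧ f u ≠ f (nextIn C u)) := by
      intro u hu
      rw [mem_filter] at hu
      rw [mem_filter]
      rw [hnext_agree u hu.1] at hu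
      exact ⟨mem_of_mem_erase hu.1, hu.2⟩
    rcases C'.eq_empty_or_nonempty with hC'e | hC'ne
    · have : C = {μ} := by rw [hCC', hC'e]; rfl
      rw [this]
      simp
    · -- ν : successor of μ in C
      have hfiltμ : C.filter (fun v => μ < v) = C' := by
        ext z
        simp only [mem_filter, hC'def, mem_erase]
        constructor
        · rintro ⟨hz, hlt⟩; exact ⟨ne_of_gt hlt, hz⟩
        · rintro ⟨hz, hzC⟩
          exact ⟨hzC, lt_of_le_of_ne (min'_le _ _ hzC) (Ne.symm hz)⟩
      have hνne : (C.filter (fun v => μ < v)).Nonempty := by rw [hfiltμ]; exact hC'ne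
      obtain ⟨hνC, hμν, _⟩ := nextIn_spec hνne
      set ν := nextIn C μ with hνdef
      have hνC' : ν ∈ C' := by
        rw [← hfiltμ]
        rw [mem_filter]
        exact ⟨hνC, hμν⟩
      have hIH := ih C' hssub
      have himg : C.image f = insert (f μ) (C'.image f) := by
        rw [hCC', image_insert]
      by_cases hfeq : f μ = f ν
      · -- no new value
        have : C.image f = C'.image f := by
          rw [himg, insert_eq_self.2]
          exact mem_image.2 ⟨ν, hνC', hfeq.symm⟩
        rw [this]
        calc (C'.image f).card ≤ 1 + _ := hIH
          _ ≤ _ := by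
            exact Nat.add_le_add_left (card_le_card hchsub) 1
      · -- new value, but also a new change at μ
        have hμch : μ ∈ C.filter (fun u => nextIn C u ≠ u ∧ f u ≠ f (nextIn C u)) := by
          rw [mem_filter]
          exact ⟨hμC, ne_of_gt hμν, hfeq⟩
        have hμnotch : μ ∉ C'.filter (fun u => nextIn C' u ≠ u ∧ f u ≠ f (nextIn C' u)) := by
          intro hmem
          exact (notMem_erase μ C) (mem_of_mem_filter _ hmem)
        have hchsub2 : insert μ (C'.filter (fun u => nextIn C' u ≠ u ∧ f u ≠ f (nextIn C' u))) ⊆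
            C.filter (fun u => nextIn C u ≠ u ∧ f u ≠ f (nextIn C u)) := by
          intro z hz
          rw [mem_insert] at hz
          rcases hz with rfl | hz
          · exact hμch
          · exact hchsub hz
        calc (C.image f).card ≤ (C'.image f).card + 1 := by
              rw [himg]; exact card_insert_le _ _
          _ ≤ (1 + (C'.filter (fun u => nextIn C' u ≠ u ∧ f u ≠ f (nextIn C' u))).card) + 1 :=
              Nat.add_le_add_right hIH 1
          _ = 1 + (insert μ (C'.filter (fun u => nextIn C' u ≠ u ∧ f u ≠ f (nextIn C' u)))).card := by
              rw [card_insert_of_notMem hμnotch]; ring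
          _ ≤ _ := Nat.add_le_add_left (card_le_card hchsub2) 1

end ZarAux

open ZarAux

open scoped Classical in
lemma part1 (n m t g : ℕ) (ht : 1 ≤ t) (hg : 1 ≤ g) (P : Fin n → ℝ × ℝ)
    (B : Fin m → Set (ℝ × ℝ)) (a b c : Fin m → ℝ)
    (hmem : ∀ i j, P i ∈ B j ↔ a j ≤ (P i).1 ∧ (P i).1 ≤ b j ∧ (P i).2 ≤ c j)
    (H : ¬ ∃ (S : Finset (Fin n)) (T : Finset (Fin m)), S.card = t ∧ T.card = g * t ∧
          ∀ i ∈ S, ∀ j ∈ T, P i ∈ B j) :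
    (univ.filter (fun p : Fin n × Fin m => P p.1 ∈ B p.2)).card ≤ t * m + 2 * (g * t^2) * n := by
  classical
  set κy : Fin n → ℝ ×ₗ ℕ := fun i => toLex ((P i).2, (i : ℕ)) with hκydef
  set κx : Fin n → ℝ ×ₗ ℕ := fun i => toLex ((P i).1, (i : ℕ)) with hκxdef
  have hκy_inj : Function.Injective κy := fun i i' h =>
    Fin.ext (congrArg (fun p => (ofLex p).2) h)
  have hκx_inj : Function.Injective κx := fun i i' h =>
    Fin.ext (congrArg (fun p => (ofLex p).2) h)
  have hκy_mono : ∀ {i i' : Fin n}, κy i < κy i' → (P i).2 ≤ (P i').2 := by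
    intro i i' h
    rcases Prod.Lex.lt_iff.1 h with h1 | ⟨h1, _⟩
    · exact le_of_lt h1
    · exact le_of_eq h1
  have hκx_mono : ∀ {i i' : Fin n}, κx i < κx i' → (P i).1 ≤ (P i').1 := by
    intro i i' h
    rcases Prod.Lex.lt_iff.1 h with h1 | ⟨h1, _⟩
    · exact le_of_lt h1
    · exact le_of_eq h1
  set E : Finset (Fin n × Fin m) := univ.filter (fun p : Fin n × Fin m => P p.1 ∈ B p.2)
    with hEdef
  set Rset : Fin m → Finset (Fin n) := fun j => univ.filter (fun i => P i ∈ B j) with hRdef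
  set deepP : Fin n × Fin m → Prop :=
    fun p => t ≤ ((Rset p.2).filter (fun z => κy z < κy p.1)).card with hdeepdef
  have hsplit : (E.filter (fun p => deepP p)).card + (E.filter (fun p => ¬ deepP p)).card
      = E.card := card_filter_add_card_filter_not _
  -- shallow bound
  have hshallow : (E.filter (fun p => ¬ deepP p)).card ≤ m * t := by
    rw [card_eq_sum_card_fiberwise (f := Prod.snd) (t := univ) (fun x _ => mem_univ _)]
    have hle : ∀ j : Fin m,
        ((E.filter (fun p => ¬ deepP p)).filter (fun p => p.2 = j)).card ≤ t := by
      intro j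
      have hinj : Set.InjOn (Prod.fst : Fin n × Fin m → Fin n)
          (((E.filter (fun p => ¬ deepP p)).filter (fun p => p.2 = j) :
            Finset (Fin n × Fin m)) : Set (Fin n × Fin m)) := by
        intro p hp q hq hpq
        simp only [coe_filter, Set.mem_setOf_eq] at hp hq
        exact Prod.ext hpq (hp.2.trans hq.2.symm)
      have hmap : ∀ p ∈ (E.filter (fun p => ¬ deepP p)).filter (fun p => p.2 = j),
          p.1 ∈ botk (Rset j) κy t := by
        intro p hp
        simp only [mem_filter] at hp
        obtain ⟨⟨hpE, hnd⟩, hpj⟩ := hp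
        rw [hEdef, mem_filter] at hpE
        rw [mem_botk]
        refine ⟨?_, ?_⟩
        · rw [hRdef]
          simp only [mem_filter]
          exact ⟨mem_univ _, hpj ▸ hpE.2⟩
        · simp only [hdeepdef] at hnd
          push_neg at hnd
          simp only [lowRank]
          rw [hpj] at hnd
          exact hnd
      calc ((E.filter (fun p => ¬ deepP p)).filter (fun p => p.2 = j)).card
          ≤ (botk (Rset j) κy t).card := card_le_card_of_injOn Prod.fst hmap hinj
        _ ≤ t := botk_card_le hκy_inj
    calc (∑ j : Fin m, ((E.filter (fun p => ¬ deepP p)).filter (fun p => p.2 = j)).card)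
        ≤ ∑ _j : Fin m, t := sum_le_sum (fun j _ => hle j)
      _ = m * t := by simp [mul_comm]
  -- deep bound
  have hdeep : (E.filter (fun p => deepP p)).card ≤ n * ((t+1) * (g*t)) := by
    rw [card_eq_sum_card_fiberwise (f := Prod.fst) (t := univ) (fun x _ => mem_univ _)]
    have hle : ∀ i : Fin n,
        ((E.filter (fun p => deepP p)).filter (fun p => p.1 = i)).card ≤ (t+1) * (g*t) := by
      intro i
      set deepR : Finset (Fin m) := univ.filter
        (fun j => P i ∈ B j ∧ t ≤ ((Rset j).filter (fun z => κy z < κy i)).card) with hdRdef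
      have hinj : Set.InjOn (Prod.snd : Fin n × Fin m → Fin m)
          (((E.filter (fun p => deepP p)).filter (fun p => p.1 = i) :
            Finset (Fin n × Fin m)) : Set (Fin n × Fin m)) := by
        intro p hp q hq hpq
        simp only [coe_filter, Set.mem_setOf_eq] at hp hq
        exact Prod.ext (hp.2.trans hq.2.symm) hpq
      have hmap : ∀ p ∈ (E.filter (fun p => deepP p)).filter (fun p => p.1 = i),
          p.2 ∈ deepR := by
        intro p hp
        simp only [mem_filter] at hp
        obtain ⟨⟨hpE, hd⟩, hpi⟩ := hp
        rw [hEdef, mem_filter] at hpE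
        rw [hdRdef, mem_filter]
        simp only [hdeepdef] at hd
        rw [hpi] at hpE hd
        exact ⟨mem_univ _, hpE.2, hd⟩
      refine (card_le_card_of_injOn Prod.snd hmap hinj).trans ?_
      -- bound deepR
      set U : Finset (Fin n) := univ.filter (fun z => κy z < κy i) with hUdef
      set A : Finset (Fin n) := U.filter (fun z => κx z < κx i) with hAdef
      set Bf : Finset (Fin n) := U.filter (fun z => κx i < κx z) with hBfdef
      have hABdisj : Disjoint A Bf := by
        rw [disjoint_left]
        intro z hz1 hz2
        rw [hAdef, mem_filter] at hz1
        rw [hBfdef, mem_filter] at hz2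
        exact absurd (hz1.2.trans hz2.2) (lt_irrefl _)
      have hUsplit : ∀ j : Fin m, U.filter (fun z => P z ∈ B j)
          = (A.filter (fun z => P z ∈ B j)) ∪ (Bf.filter (fun z => P z ∈ B j)) := by
        intro j
        ext z
        constructor
        · intro hz
          rw [mem_filter] at hz
          obtain ⟨hzU, hzB⟩ := hz
          have hzi : z ≠ i := by
            intro h
            rw [hUdef, mem_filter, h] at hzU
            exact absurd hzU.2 (lt_irrefl _)
          rcases lt_trichotomy (κx z) (κx i) with hlt | heq | hgt
          · exact mem_union_left _ (mem_filter.2 ⟨by rw [hAdef, mem_filter]; exact ⟨hzU, hlt⟩, hzB⟩)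
          · exact absurd (hκx_inj heq) hzi
          · exact mem_union_right _
              (mem_filter.2 ⟨by rw [hBfdef, mem_filter]; exact ⟨hzU, hgt⟩, hzB⟩)
        · intro hz
          rcases mem_union.1 hz with hz | hz
          · rw [mem_filter] at hz
            have h1 := hz.1
            rw [hAdef, mem_filter] at h1
            exact mem_filter.2 ⟨h1.1, hz.2⟩
          · rw [mem_filter] at hz
            have h1 := hz.1
            rw [hBfdef, mem_filter] at h1
            exact mem_filter.2 ⟨h1.1, hz.2⟩
      have hWj : ∀ j : Fin m, (Rset j).filter (fun z => κy z < κy i)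
          = U.filter (fun z => P z ∈ B j) := by
        intro j
        ext z
        simp only [hRdef, hUdef, mem_filter, mem_univ, true_and]
        tauto
      have hWcard : ∀ j : Fin m, (A.filter (fun z => P z ∈ B j)).card
          + (Bf.filter (fun z => P z ∈ B j)).card
          = ((Rset j).filter (fun z => κy z < κy i)).card := by
        intro j
        rw [hWj j, hUsplit j, card_union_of_disjoint]
        exact disjoint_filter_filter hABdisj
      set kfun : Fin m → ℕ := fun j => min ((A.filter (fun z => P z ∈ B j)).card) t with hkdef
      have hkmem : ∀ j ∈ deepR, kfun j ∈ range (t+1) := by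
        intro j _
        rw [mem_range, hkdef]
        exact Nat.lt_succ_of_le (Nat.min_le_right _ _)
      rw [card_eq_sum_card_fiberwise hkmem]
      have hfib : ∀ k₀ ∈ range (t+1), (deepR.filter (fun j => kfun j = k₀)).card ≤ g*t := by
        intro k₀ hk₀r
        rw [mem_range] at hk₀r
        by_contra hgt'
        push_neg at hgt'
        obtain ⟨T, hTsub, hTcard⟩ := Finset.exists_subset_card_eq (le_of_lt hgt')
        have hTne : T.Nonempty := by
          rw [← card_pos, hTcard]
          positivity
        obtain ⟨j₀, hj₀T⟩ := hTne
        have hj₀ := hTsub hj₀T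
        rw [mem_filter] at hj₀
        obtain ⟨hj₀dR, hj₀k⟩ := hj₀
        rw [hdRdef, mem_filter] at hj₀dR
        obtain ⟨-, hij₀, hdeep₀⟩ := hj₀dR
        -- properties of fiber members
        have hfibprop : ∀ j'' ∈ T, P i ∈ B j''
            ∧ k₀ ≤ (A.filter (fun z => P z ∈ B j'')).card
            ∧ (t - k₀) ≤ (Bf.filter (fun z => P z ∈ B j'')).card := by
          intro j'' hj''
          have hj'' := hTsub hj''
          rw [mem_filter] at hj''
          obtain ⟨hdRj, hkj⟩ := hj''
          rw [hdRdef, mem_filter] at hdRj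
          obtain ⟨-, hiB, hdj⟩ := hdRj
          simp only [hkdef] at hkj
          refine ⟨hiB, ?_, ?_⟩
          · exact hkj ▸ Nat.min_le_left _ _
          · rcases Nat.lt_or_ge ((A.filter (fun z => P z ∈ B j'')).card) t with hlt | hge
            · have h1 : (A.filter (fun z => P z ∈ B j'')).card = k₀ := by
                rw [← hkj, Nat.min_eq_left (le_of_lt hlt)]
              have h2 := hWcard j''
              omega
            · have h1 : k₀ = t := by rw [← hkj, Nat.min_eq_right hge]
              omega
        have hAk : k₀ ≤ A.card := by
          have := (hfibprop j₀ hj₀T).2.1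
          exact this.trans (card_le_card (filter_subset _ _))
        have hBk : t - k₀ ≤ Bf.card := by
          have := (hfibprop j₀ hj₀T).2.2
          exact this.trans (card_le_card (filter_subset _ _))
        -- the canonical point set
        set κxd : Fin n → (ℝ ×ₗ ℕ)ᵒᵈ := fun z => OrderDual.toDual (κx z) with hκxddef
        have hκxd_inj : Function.Injective κxd := fun z z' h => hκx_inj (by
          exact congrArg OrderDual.ofDual h)
        set SA : Finset (Fin n) := botk A κxd k₀ with hSAdef
        set SB : Finset (Fin n) := botk Bf κx (t - k₀) with hSBdef
        have hSS : (SA ∪ SB).card = t := by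
          have hd : Disjoint SA SB := Disjoint.mono botk_subset botk_subset hABdisj
          rw [card_union_of_disjoint hd]
          have h1 : SA.card = k₀ := botk_card_eq hκxd_inj hAk
          have h2 : SB.card = t - k₀ := botk_card_eq hκx_inj hBk
          omega
        -- incidences
        have hinc : ∀ z ∈ SA ∪ SB, ∀ j'' ∈ T, P z ∈ B j'' := by
          intro z hz j'' hj''
          obtain ⟨hiB, hAc, hBc⟩ := hfibprop j'' hj''
          rw [mem_union] at hz
          rcases hz with hz | hz
          · -- top of A
            have hsub : SA ⊆ A.filter (fun z => P z ∈ B j'') := by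
              rw [hSAdef]
              apply botk_subset_downclosed hκxd_inj (filter_subset _ _) _ hAc
              intro d hd z' hz' hlt
              rw [mem_filter] at hd ⊢
              refine ⟨hz', ?_⟩
              have hdx : κx d < κx z' := hlt
              rw [hAdef, mem_filter] at hz'
              obtain ⟨hz'U, hz'x⟩ := hz'
              rw [hUdef, mem_filter] at hz'U
              rw [hmem]
              have hdB := (hmem d j'').1 hd.2
              have hiB' := (hmem i j'').1 hiB
              refine ⟨le_trans hdB.1 (hκx_mono hdx), le_trans (hκx_mono hz'x) hiB'.2.1,
                le_trans (hκy_mono hz'U.2) hiB'.2.2⟩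
            have := hsub hz
            rw [mem_filter] at this
            exact this.2
          · -- bottom of B
            have hsub : SB ⊆ Bf.filter (fun z => P z ∈ B j'') := by
              rw [hSBdef]
              apply botk_subset_downclosed hκx_inj (filter_subset _ _) _ hBc
              intro d hd z' hz' hlt
              rw [mem_filter] at hd ⊢
              refine ⟨hz', ?_⟩
              rw [hBfdef, mem_filter] at hz'
              obtain ⟨hz'U, hz'x⟩ := hz'
              rw [hUdef, mem_filter] at hz'U
              rw [hmem]
              have hdB := (hmem d j'').1 hd.2
              have hiB' := (hmem i j'').1 hiB
              refine ⟨le_trans hiB'.1 (hκx_mono hz'x), le_trans (hκx_mono hlt) hdB.2.1,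
                le_trans (hκy_mono hz'U.2) hiB'.2.2⟩
            have := hsub hz
            rw [mem_filter] at this
            exact this.2
        exact H ⟨SA ∪ SB, T, hSS, hTcard, hinc⟩
      calc (∑ k₀ ∈ range (t+1), (deepR.filter (fun j => kfun j = k₀)).card)
          ≤ ∑ _k₀ ∈ range (t+1), g*t := sum_le_sum hfib
        _ = (t+1) * (g*t) := by simp [mul_comm]
    calc (∑ i : Fin n, ((E.filter (fun p => deepP p)).filter (fun p => p.1 = i)).card)
        ≤ ∑ _i : Fin n, (t+1)*(g*t) := sum_le_sum (fun i _ => hle i)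
      _ = n * ((t+1)*(g*t)) := by simp [mul_comm]
  have harith : n * ((t+1) * (g*t)) + m * t ≤ t * m + 2 * (g * t^2) * n := by
    have h1 : (t+1) * (g*t) ≤ 2 * (g * t^2) := by
      have h2 : g*t ≤ g*t^2 := by
        calc g*t = g*t*1 := by ring
          _ ≤ g*t*t := Nat.mul_le_mul_left _ ht
          _ = g*t^2 := by ring
      calc (t+1)*(g*t) = g*t^2 + g*t := by ring
        _ ≤ g*t^2 + g*t^2 := Nat.add_le_add_left h2 _
        _ = 2*(g*t^2) := by ring
    calc n * ((t+1) * (g*t)) + m * t ≤ n * (2 * (g * t^2)) + m * t := by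
          exact Nat.add_le_add_right (Nat.mul_le_mul_left n h1) (m*t)
      _ = t * m + 2 * (g * t^2) * n := by ring
  omega


open scoped Classical in
lemma part2 (n m t g : ℕ) (ht : 1 ≤ t) (hg : 1 ≤ g) (P : Fin n → ℝ × ℝ)
    (B : Fin m → Set (ℝ × ℝ)) (a b c : Fin m → ℝ)
    (hmem : ∀ i j, P i ∈ B j ↔ a j ≤ (P i).1 ∧ (P i).1 ≤ b j ∧ (P i).2 ≤ c j)
    (H : ¬ ∃ (S : Finset (Fin n)) (T : Finset (Fin m)), S.card = g * t ∧ T.card = t ∧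
          ∀ i ∈ S, ∀ j ∈ T, P i ∈ B j) :
    (univ.filter (fun p : Fin n × Fin m => P p.1 ∈ B p.2)).card
      ≤ t * n + (g*t) * (m + 2 * m * t) := by
  classical
  set κc : Fin m → ℝ ×ₗ ℕ := fun j => toLex (c j, (j : ℕ)) with hκcdef
  have hκc_inj : Function.Injective κc := fun j j' h =>
    Fin.ext (congrArg (fun p => (ofLex p).2) h)
  have hκc_mono : ∀ {j j' : Fin m}, κc j < κc j' → c j ≤ c j' := by
    intro j j' h
    rcases Prod.Lex.lt_iff.1 h with h1 | ⟨h1, _⟩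
    · exact le_of_lt h1
    · exact le_of_eq h1
  set E : Finset (Fin n × Fin m) := univ.filter (fun p : Fin n × Fin m => P p.1 ∈ B p.2)
    with hEdef
  set Sset : Fin n → Finset (Fin m) := fun i => univ.filter (fun j => P i ∈ B j) with hSdef
  set abv : Fin n → Fin m → Finset (Fin m) :=
    fun i j => (Sset i).filter (fun j' => κc j < κc j') with habvdef
  set deepP : Fin n × Fin m → Prop := fun p => t ≤ (abv p.1 p.2).card with hdeepdef
  have hsplit : (E.filter (fun p => deepP p)).card + (E.filter (fun p => ¬ deepP p)).card
      = E.card := card_filter_add_card_filter_not _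
  -- SHALLOW
  have hshallow : (E.filter (fun p => ¬ deepP p)).card ≤ t * n := by
    rw [card_eq_sum_card_fiberwise (f := Prod.fst) (t := univ) (fun x _ => mem_univ _)]
    have hdualinj : Function.Injective (fun j : Fin m => OrderDual.toDual (κc j)) := fun u v h =>
      hκc_inj (congrArg OrderDual.ofDual h)
    have hle : ∀ i : Fin n,
        ((E.filter (fun p => ¬ deepP p)).filter (fun p => p.1 = i)).card ≤ t := by
      intro i
      have hinj : Set.InjOn (Prod.snd : Fin n × Fin m → Fin m)
          (((E.filter (fun p => ¬ deepP p)).filter (fun p => p.1 = i) :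
            Finset (Fin n × Fin m)) : Set (Fin n × Fin m)) := by
        intro p hp q hq hpq
        simp only [coe_filter, Set.mem_setOf_eq] at hp hq
        exact Prod.ext (hp.2.trans hq.2.symm) hpq
      have hmap : ∀ p ∈ (E.filter (fun p => ¬ deepP p)).filter (fun p => p.1 = i),
          p.2 ∈ botk (Sset i) (fun j => OrderDual.toDual (κc j)) t := by
        intro p hp
        simp only [mem_filter] at hp
        obtain ⟨⟨hpE, hnd⟩, hpi⟩ := hp
        rw [hEdef, mem_filter] at hpE
        rw [mem_botk]
        constructor
        · rw [hSdef]
          simp only [mem_filter]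
          exact ⟨mem_univ _, hpi ▸ hpE.2⟩
        · simp only [hdeepdef] at hnd
          push_neg at hnd
          simp only [lowRank]
          rw [hpi] at hnd
          have heq : (Sset i).filter
              (fun y => (fun j => OrderDual.toDual (κc j)) y < (fun j => OrderDual.toDual (κc j)) p.2)
              = abv i p.2 := by
            simp only [habvdef]
            apply filter_congr
            intro x _
            simp
          rw [heq]
          exact hnd
      calc ((E.filter (fun p => ¬ deepP p)).filter (fun p => p.1 = i)).card
          ≤ (botk (Sset i) (fun j => OrderDual.toDual (κc j)) t).card :=
            card_le_card_of_injOn Prod.snd hmap hinj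
        _ ≤ t := botk_card_le hdualinj
    calc (∑ i : Fin n, ((E.filter (fun p => ¬ deepP p)).filter (fun p => p.1 = i)).card)
        ≤ ∑ _i : Fin n, t := sum_le_sum (fun i _ => hle i)
      _ = t * n := by simp [mul_comm]
  -- positions
  set xpos : Fin n → ℝ ×ₗ ℤ := fun i => toLex ((P i).1, (0:ℤ)) with hxposdef
  set memP : (ℝ ×ₗ ℤ) → Fin m → Prop :=
    fun q j => toLex (a j, (0:ℤ)) ≤ q ∧ q ≤ toLex (b j, (0:ℤ)) with hmemPdef
  have hconvex : ∀ (j : Fin m) (p q r' : ℝ ×ₗ ℤ), memP p j → memP r' j → p ≤ q → q ≤ r' →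
      memP q j := by
    intro j p q r' h1 h2 hpq hqr
    exact ⟨le_trans h1.1 hpq, le_trans hqr h2.2⟩
  have hle00 : ∀ s s' : ℝ, toLex (s, (0:ℤ)) ≤ toLex (s', (0:ℤ)) ↔ s ≤ s' := by
    intro s s'
    rw [Prod.Lex.le_iff]
    constructor
    · rintro (h | ⟨h, -⟩)
      · exact le_of_lt h
      · exact le_of_eq h
    · intro h
      rcases lt_or_eq_of_le h with h | h
      · exact Or.inl h
      · exact Or.inr ⟨h, le_refl _⟩
  have hle01 : ∀ s s' : ℝ, toLex (s, (0:ℤ)) ≤ toLex (s', (1:ℤ)) ↔ s ≤ s' := by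
    intro s s'
    rw [Prod.Lex.le_iff]
    constructor
    · rintro (h | ⟨h, -⟩)
      · exact le_of_lt h
      · exact le_of_eq h
    · intro h
      rcases lt_or_eq_of_le h with h | h
      · exact Or.inl h
      · exact Or.inr ⟨h, by norm_num⟩
  have hle10 : ∀ s s' : ℝ, toLex (s, (1:ℤ)) ≤ toLex (s', (0:ℤ)) ↔ s < s' := by
    intro s s'
    rw [Prod.Lex.le_iff]
    constructor
    · rintro (h | ⟨-, hc⟩)
      · exact h
      · exact absurd hc (by norm_num)
    · exact fun h => Or.inl h
  have hmemPx : ∀ (i : Fin n) (j' : Fin m),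
      memP (xpos i) j' ↔ a j' ≤ (P i).1 ∧ (P i).1 ≤ b j' := by
    intro i j'
    simp only [hmemPdef, hxposdef]
    rw [hle00, hle00]
  set stabAll : (ℝ ×ₗ ℤ) → Finset (Fin m) := fun q => univ.filter (fun j' => memP q j')
    with hstabAlldef
  set stab : Fin m → (ℝ ×ₗ ℤ) → Finset (Fin m) :=
    fun j₀ q => (stabAll q).filter (fun j' => κc j₀ < κc j') with hstabdef
  set Gfun : Fin m → (ℝ ×ₗ ℤ) → Finset (Fin m) :=
    fun j₀ q => botk (stab j₀ q) κc (t-1) with hGdef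
  set Oval : Fin m → (ℝ ×ₗ ℤ) → Option (Finset (Fin m)) :=
    fun j₀ q => if t-1 ≤ (stab j₀ q).card then some (Gfun j₀ q) else none with hOdef
  set EV : Finset ℝ := univ.image a ∪ univ.image b with hEVdef
  set T' : Finset (ℝ ×ₗ ℤ) :=
    EV.biUnion (fun e => {toLex (e,(0:ℤ)), toLex (e,(1:ℤ))}) with hT'def
  set Cset : Fin m → Finset (ℝ ×ₗ ℤ) := fun j₀ => T'.filter (fun q => memP q j₀) with hCdef
  -- transfer of sample positions into T'
  have htransfer : ∀ (i : Fin n) (j₀ : Fin m), P i ∈ B j₀ →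
      ∃ q ∈ T', (∀ j', memP q j' ↔ memP (xpos i) j') := by
    intro i j₀ hij
    have hax : a j₀ ≤ (P i).1 ∧ (P i).1 ≤ b j₀ := by
      rw [hmem] at hij
      exact ⟨hij.1, hij.2.1⟩
    have haEV : a j₀ ∈ EV := by
      rw [hEVdef]
      exact mem_union_left _ (mem_image_of_mem a (mem_univ _))
    have hEVne : (EV.filter (fun e => e ≤ (P i).1)).Nonempty :=
      ⟨a j₀, mem_filter.2 ⟨haEV, hax.1⟩⟩
    obtain ⟨e, hemem, hele, hemax⟩ : ∃ e, e ∈ EV ∧ e ≤ (P i).1 ∧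
        ∀ e' ∈ EV, e' ≤ (P i).1 → e' ≤ e := by
      refine ⟨(EV.filter (fun e => e ≤ (P i).1)).max' hEVne, ?_, ?_, ?_⟩
      · have := max'_mem _ hEVne
        rw [mem_filter] at this
        exact this.1
      · have := max'_mem _ hEVne
        rw [mem_filter] at this
        exact this.2
      · exact fun e' h1 h2 =>
          le_max' (EV.filter (fun x => x ≤ (P i).1)) e' (mem_filter.2 ⟨h1, h2⟩)
    have heT0 : toLex (e, (0:ℤ)) ∈ T' := by
      rw [hT'def]
      exact mem_biUnion.2 ⟨e, hemem, by simp⟩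
    have heT1 : toLex (e, (1:ℤ)) ∈ T' := by
      rw [hT'def]
      exact mem_biUnion.2 ⟨e, hemem, by simp⟩
    rcases eq_or_lt_of_le hele with heq | hlt
    · refine ⟨toLex (e, 0), heT0, fun j' => ?_⟩
      have hxe : xpos i = toLex (e, (0:ℤ)) := by
        rw [hxposdef, heq]
      rw [hxe]
    · refine ⟨toLex (e, 1), heT1, fun j' => ?_⟩
      have hq1 : memP (toLex (e,(1:ℤ))) j' ↔ a j' ≤ e ∧ e < b j' := by
        simp only [hmemPdef]
        rw [hle01, hle10]
      rw [hq1, hmemPx i j']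
      constructor
      · rintro ⟨h1, h2⟩
        refine ⟨h1.trans (le_of_lt hlt), ?_⟩
        by_contra hbx
        push_neg at hbx
        have hbe : b j' ≤ e := hemax _
          (by rw [hEVdef]; exact mem_union_right _ (mem_image_of_mem b (mem_univ _)))
          (le_of_lt hbx)
        exact absurd (h2.trans_le hbe) (lt_irrefl _)
      · rintro ⟨h1, h2⟩
        exact ⟨hemax _
          (by rw [hEVdef]; exact mem_union_left _ (mem_image_of_mem a (mem_univ _))) h1,
          lt_of_lt_of_le hlt h2⟩
  -- DEEP
  set Dset : Finset (Fin n × Fin m) := E.filter (fun p => deepP p) with hDdef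
  set Wfun : Fin n × Fin m → Finset (Fin m) := fun p => botk (abv p.1 p.2) κc t with hWdef
  set Wits : Finset (Finset (Fin m)) := Dset.image Wfun with hWitsdef
  have hdeepcard : ∀ p ∈ Dset, t ≤ (abv p.1 p.2).card := by
    intro p hp
    rw [hDdef, mem_filter] at hp
    have := hp.2
    simp only [hdeepdef] at this
    exact this
  -- canonical decomposition of a witness
  have hWid : ∀ p ∈ Dset, ∀ μ : Fin m, μ ∈ Wfun p → (∀ z ∈ Wfun p, κc μ ≤ κc z) →
      ∃ q ∈ Cset μ, t - 1 ≤ (stab μ q).card ∧ Gfun μ q = (Wfun p).erase μ := by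
    intro p hpD μ hμw hμmin
    have hFt : t ≤ (abv p.1 p.2).card := hdeepcard p hpD
    simp only [hWdef] at hμw hμmin
    have hμF : μ ∈ abv p.1 p.2 := botk_subset hμw
    have hμminF : ∀ z ∈ abv p.1 p.2, κc μ ≤ κc z := by
      intro z hz
      by_contra hzc
      push_neg at hzc
      have h2 : lowRank (abv p.1 p.2) κc μ < t := (mem_botk.1 hμw).2
      have h1 : lowRank (abv p.1 p.2) κc z < lowRank (abv p.1 p.2) κc μ :=
        lowRank_lt_of_lt hz hzc
      have hzW : z ∈ botk (abv p.1 p.2) κc t := mem_botk.2 ⟨hz, by omega⟩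
      exact absurd hzc (not_lt.2 (hμmin z hzW))
    have hjμ : κc p.2 < κc μ := by
      have h := hμF
      simp only [habvdef, mem_filter] at h
      exact h.2
    have hμS : μ ∈ Sset p.1 := by
      have h := hμF
      simp only [habvdef, mem_filter] at h
      exact h.1
    have hPiμ : P p.1 ∈ B μ := by
      have h := hμS
      simp only [hSdef, mem_filter] at h
      exact h.2
    have herase : abv p.1 μ = (abv p.1 p.2).erase μ := by
      ext z
      simp only [habvdef, mem_filter, mem_erase]
      constructor
      · rintro ⟨hzS, hμz⟩
        exact ⟨fun e => absurd (e ▸ hμz) (lt_irrefl _), hzS, hjμ.trans hμz⟩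
      · rintro ⟨hzμ, hzS, hjz⟩
        refine ⟨hzS, ?_⟩
        have hle : κc μ ≤ κc z := hμminF z (by simp only [habvdef, mem_filter]; exact ⟨hzS, hjz⟩)
        rcases lt_or_eq_of_le hle with h | h
        · exact h
        · exact absurd (hκc_inj h).symm hzμ
    have hwerase : (Wfun p).erase μ = botk ((abv p.1 p.2).erase μ) κc (t-1) := by
      simp only [hWdef]
      rw [botk_erase_min hκc_inj hμF hμminF ht]
      apply erase_insert
      intro hc
      exact (mem_erase.1 (botk_subset hc)).1 rfl
    obtain ⟨q, hqT', hqiff⟩ := htransfer p.1 μ hPiμ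
    have hstabq : stab μ q = abv p.1 μ := by
      ext j'
      simp only [hstabdef, hstabAlldef, habvdef, hSdef, mem_filter, mem_univ, true_and]
      constructor
      · rintro ⟨hmq, hμj'⟩
        rw [hqiff j', hmemPx p.1 j'] at hmq
        refine ⟨?_, hμj'⟩
        rw [hmem]
        refine ⟨hmq.1, hmq.2, ?_⟩
        have h1 : (P p.1).2 ≤ c μ := ((hmem p.1 μ).1 hPiμ).2.2
        exact h1.trans (hκc_mono hμj')
      · rintro ⟨hPz, hμj'⟩
        refine ⟨?_, hμj'⟩
        rw [hqiff j', hmemPx p.1 j']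
        have h := (hmem p.1 j').1 hPz
        exact ⟨h.1, h.2.1⟩
    have hqC : q ∈ Cset μ := by
      simp only [hCdef, mem_filter]
      refine ⟨hqT', ?_⟩
      rw [hqiff μ, hmemPx p.1 μ]
      have h := (hmem p.1 μ).1 hPiμ
      exact ⟨h.1, h.2.1⟩
    have hcard2 : t - 1 ≤ (stab μ q).card := by
      rw [hstabq, herase, card_erase_of_mem hμF]
      omega
    refine ⟨q, hqC, hcard2, ?_⟩
    simp only [hGdef]
    rw [hstabq, herase, ← hwerase]
  -- fiber bound
  have hDcard : Dset.card ≤ Wits.card * (g*t) := by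
    rw [card_eq_sum_card_fiberwise (f := Wfun) (t := Wits)
      (fun p hp => by rw [hWitsdef]; exact mem_image_of_mem _ hp)]
    have hle : ∀ w ∈ Wits, (Dset.filter (fun p => Wfun p = w)).card ≤ g*t := by
      intro w hw
      have hw' := hw
      rw [hWitsdef] at hw'
      obtain ⟨p₀, hp₀D, hp₀w⟩ := mem_image.1 hw'
      have hwcard : w.card = t := by
        rw [← hp₀w]
        simp only [hWdef]
        exact botk_card_eq hκc_inj (hdeepcard p₀ hp₀D)
      have hCP : (univ.filter (fun i : Fin n => ∀ j' ∈ w, P i ∈ B j')).card ≤ g*t := by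
        by_contra hc
        push_neg at hc
        obtain ⟨S, hSsub, hScard⟩ := Finset.exists_subset_card_eq (le_of_lt hc)
        refine H ⟨S, w, hScard, hwcard, fun i hi j hj => ?_⟩
        have h := hSsub hi
        rw [mem_filter] at h
        exact h.2 j hj
      refine le_trans (card_le_card_of_injOn Prod.fst ?_ ?_) hCP
      · intro p hp
        rw [mem_coe, mem_filter] at hp
        obtain ⟨hpD, hpw⟩ := hp
        rw [mem_coe, mem_filter]
        refine ⟨mem_univ _, fun j' hj' => ?_⟩
        rw [← hpw] at hj'
        simp only [hWdef] at hj'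
        have h1 := botk_subset hj'
        simp only [habvdef, hSdef, mem_filter, mem_univ, true_and] at h1
        exact h1.1
      · intro p hp q hq hfst
        simp only [coe_filter, Set.mem_setOf_eq] at hp hq
        obtain ⟨hpD, hpw⟩ := hp
        obtain ⟨hqD, hqw⟩ := hq
        have hwne : w.Nonempty := by
          rw [← card_pos, hwcard]
          omega
        obtain ⟨μ, hμw, hμmin⟩ := w.exists_min_image κc hwne
        have hchar : ∀ r : Fin n × Fin m, r ∈ Dset → Wfun r = w →
            κc r.2 < κc μ ∧ (∀ z ∈ Sset r.1, κc z < κc μ → κc z ≤ κc r.2) := by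
          intro r hrD hrw
          have hFt := hdeepcard r hrD
          have hμw' : μ ∈ Wfun r := by rw [hrw]; exact hμw
          simp only [hWdef] at hμw'
          have hμF := botk_subset hμw'
          have hjμ : κc r.2 < κc μ := by
            have h := hμF
            simp only [habvdef, mem_filter] at h
            exact h.2
          refine ⟨hjμ, fun z hzS hzμ => ?_⟩
          by_contra hc
          push_neg at hc
          have hzF : z ∈ abv r.1 r.2 := by
            simp only [habvdef, mem_filter]
            exact ⟨hzS, hc⟩
          have h1 : lowRank (abv r.1 r.2) κc z < lowRank (abv r.1 r.2) κc μ :=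
            lowRank_lt_of_lt hzF hzμ
          have h2 : lowRank (abv r.1 r.2) κc μ < t := (mem_botk.1 hμw').2
          have hzw : z ∈ w := by
            rw [← hrw]
            simp only [hWdef]
            exact mem_botk.2 ⟨hzF, by omega⟩
          exact absurd hzμ (not_lt.2 (hμmin z hzw))
        obtain ⟨h1p, h2p⟩ := hchar p hpD hpw
        obtain ⟨h1q, h2q⟩ := hchar q hqD hqw
        have hp2S : p.2 ∈ Sset p.1 := by
          have h := hpD
          rw [hDdef, mem_filter] at h
          have h2 := h.1
          rw [hEdef, mem_filter] at h2
          simp only [hSdef, mem_filter]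
          exact ⟨mem_univ _, h2.2⟩
        have hq2S : q.2 ∈ Sset p.1 := by
          have h := hqD
          rw [hDdef, mem_filter] at h
          have h2 := h.1
          rw [hEdef, mem_filter] at h2
          simp only [hSdef, mem_filter]
          refine ⟨mem_univ _, ?_⟩
          rw [hfst]
          exact h2.2
        rw [← hfst] at h2q
        have hle1 : κc p.2 ≤ κc q.2 := h2q p.2 hp2S h1p
        have hle2 : κc q.2 ≤ κc p.2 := h2p q.2 hq2S h1q
        exact Prod.ext hfst (hκc_inj (le_antisymm hle1 hle2))
    calc (∑ w ∈ Wits, (Dset.filter (fun p => Wfun p = w)).card)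
        ≤ ∑ _w ∈ Wits, g*t := sum_le_sum hle
      _ = Wits.card * (g*t) := by rw [sum_const, smul_eq_mul]
  -- witness count
  set TargetF : Finset (Option (Fin m) × Option (Finset (Fin m))) :=
    univ.biUnion (fun j₀ => ((Cset j₀).image (Oval j₀)).image (fun v => (some j₀, v)))
    with hTargetdef
  have hexw : ∀ w ∈ Wits, ∃ μ, μ ∈ w ∧ ∀ z ∈ w, κc μ ≤ κc z := by
    intro w hw
    rw [hWitsdef] at hw
    obtain ⟨p₀, hp₀D, hp₀w⟩ := mem_image.1 hw
    have hwcard : w.card = t := by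
      rw [← hp₀w]
      simp only [hWdef]
      exact botk_card_eq hκc_inj (hdeepcard p₀ hp₀D)
    have hwne : w.Nonempty := by
      rw [← card_pos, hwcard]
      omega
    obtain ⟨μ₀, h1, h2⟩ := w.exists_min_image κc hwne
    exact ⟨μ₀, h1, h2⟩
  have hWitsT : Wits.card ≤ TargetF.card := by
    set φ : Finset (Fin m) → Option (Fin m) × Option (Finset (Fin m)) := fun w =>
      if h : ∃ μ, μ ∈ w ∧ ∀ z ∈ w, κc μ ≤ κc z then
        (some h.choose, some (w.erase h.choose)) else (none, none) with hφdef
    apply card_le_card_of_injOn φ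
    · -- membership
      intro w hw
      have hw' := hw
      rw [hWitsdef] at hw'
      obtain ⟨p₀, hp₀D, hp₀w⟩ := mem_image.1 hw'
      have hex := hexw w hw
      have hφw : φ w = (some hex.choose, some (w.erase hex.choose)) := by
        simp only [hφdef]
        exact dif_pos hex
      obtain ⟨hch1, hch2⟩ := hex.choose_spec
      obtain ⟨q, hqC, hqcard, hqG⟩ := hWid p₀ hp₀D hex.choose
        (by rw [hp₀w]; exact hch1) (by rw [hp₀w]; exact hch2)
      rw [hTargetdef]
      apply mem_biUnion.2
      refine ⟨hex.choose, mem_univ _, ?_⟩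
      apply mem_image.2
      refine ⟨Oval hex.choose q, mem_image_of_mem _ hqC, ?_⟩
      rw [hφw]
      have hOq : Oval hex.choose q = some (w.erase hex.choose) := by
        simp only [hOdef]
        rw [if_pos hqcard, hqG, hp₀w]
      rw [hOq]
    · -- injectivity
      intro w hw w' hw' heq
      rw [mem_coe] at hw hw'
      have hex := hexw w hw
      have hex' := hexw w' hw'
      rw [hφdef] at heq
      simp only [dif_pos hex, dif_pos hex'] at heq
      have e1 : hex.choose = hex'.choose := by
        have h := congrArg Prod.fst heq
        simpa using h
      have e2 : w.erase hex.choose = w'.erase hex'.choose := by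
        have h := congrArg Prod.snd heq
        simpa using h
      calc w = insert hex.choose (w.erase hex.choose) :=
            (insert_erase hex.choose_spec.1).symm
        _ = insert hex'.choose (w'.erase hex'.choose) := by rw [e2, e1]
        _ = w' := insert_erase hex'.choose_spec.1
  set chSet : Fin m → Finset (ℝ ×ₗ ℤ) := fun j₀ => (Cset j₀).filter
    (fun u => nextIn (Cset j₀) u ≠ u ∧ Oval j₀ u ≠ Oval j₀ (nextIn (Cset j₀) u)) with hchdef
  have hTargetcard : TargetF.card ≤ m + ∑ j₀ : Fin m, (chSet j₀).card := by
    have h1 : TargetF.card ≤ ∑ j₀ : Fin m, (((Cset j₀).image (Oval j₀)).image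
        (fun v => ((some j₀ : Option (Fin m)), v))).card := card_biUnion_le
    have h2 : ∀ j₀ : Fin m, (((Cset j₀).image (Oval j₀)).image
        (fun v => ((some j₀ : Option (Fin m)), v))).card ≤ 1 + (chSet j₀).card := by
      intro j₀
      exact le_trans card_image_le (image_card_le_changes (Cset j₀) (Oval j₀))
    calc TargetF.card ≤ ∑ j₀ : Fin m, (((Cset j₀).image (Oval j₀)).image
          (fun v => ((some j₀ : Option (Fin m)), v))).card := h1
      _ ≤ ∑ j₀ : Fin m, (1 + (chSet j₀).card) := sum_le_sum (fun j₀ _ => h2 j₀)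
      _ = m + ∑ j₀ : Fin m, (chSet j₀).card := by
          rw [sum_add_distrib]
          simp
  -- change points are few
  have hchanges : (∑ j₀ : Fin m, (chSet j₀).card) ≤ 2 * m * t := by
    set Δfin : (ℝ ×ₗ ℤ) → Finset (Fin m) := fun u => univ.filter
      (fun j => ¬ (memP u j ↔ memP (nextIn T' u) j)) with hΔdef
    set TOK : Finset ((ℝ ×ₗ ℤ) × Fin m × ℕ) := T'.biUnion
      (fun u => ((Δfin u) ×ˢ range t).image (fun z => (u, z.1, z.2))) with hTOKdef
    set CH : Finset ((_ : Fin m) × (ℝ ×ₗ ℤ)) := univ.sigma (fun j₀ => chSet j₀) with hCHdef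
    have hsum : CH.card = ∑ j₀ : Fin m, (chSet j₀).card := card_sigma _ _
    -- per-rectangle bound on boundary positions
    have hperj : ∀ j : Fin m,
        (T'.filter (fun u => ¬ (memP u j ↔ memP (nextIn T' u) j))).card ≤ 2 := by
      intro j
      have hsub : T'.filter (fun u => ¬ (memP u j ↔ memP (nextIn T' u) j)) ⊆
          (T'.filter (fun u => ¬ memP u j ∧ memP (nextIn T' u) j)) ∪
          (T'.filter (fun u => memP u j ∧ ¬ memP (nextIn T' u) j)) := by
        intro u hu
        rw [mem_filter] at hu
        rw [mem_union, mem_filter, mem_filter]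
        by_cases h1 : memP u j
        · exact Or.inr ⟨hu.1, h1, fun h2 => hu.2 (iff_of_true h1 h2)⟩
        · refine Or.inl ⟨hu.1, h1, ?_⟩
          by_contra h2
          exact hu.2 (iff_of_false h1 h2)
      have hop : (T'.filter (fun u => ¬ memP u j ∧ memP (nextIn T' u) j)).card ≤ 1 := by
        rw [card_le_one]
        have key : ∀ x y : ℝ ×ₗ ℤ, x ∈ T' → y ∈ T' → ¬ memP x j → memP (nextIn T' x) j →
            ¬ memP y j → memP (nextIn T' y) j → x < y → False := by
          intro x y hxT hyT hx1 hx2 hy1 hy2 hxy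
          have hnex : (T'.filter (fun v => x < v)).Nonempty := ⟨y, mem_filter.2 ⟨hyT, hxy⟩⟩
          obtain ⟨hvT, hxv, hvmin⟩ := nextIn_spec hnex
          have hv2 : nextIn T' x ≤ y := hvmin y hyT hxy
          have hney : (T'.filter (fun v => y < v)).Nonempty := by
            by_contra hemp
            rw [nextIn_eq_self hemp] at hy2
            exact hy1 hy2
          obtain ⟨hwT, hyw, hwmin⟩ := nextIn_spec hney
          exact hy1 (hconvex j (nextIn T' x) y (nextIn T' y) hx2 hy2 hv2 (le_of_lt hyw))
        intro u1 h1 u2 h2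
        rw [mem_filter] at h1 h2
        rcases lt_trichotomy u1 u2 with hlt | heqq | hlt
        · exact absurd (key u1 u2 h1.1 h2.1 h1.2.1 h1.2.2 h2.2.1 h2.2.2 hlt) (fun h => h)
        · exact heqq
        · exact absurd (key u2 u1 h2.1 h1.1 h2.2.1 h2.2.2 h1.2.1 h1.2.2 hlt) (fun h => h)
      have hcl : (T'.filter (fun u => memP u j ∧ ¬ memP (nextIn T' u) j)).card ≤ 1 := by
        rw [card_le_one]
        have key : ∀ x y : ℝ ×ₗ ℤ, x ∈ T' → y ∈ T' → memP x j → ¬ memP (nextIn T' x) j →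
            memP y j → x < y → False := by
          intro x y hxT hyT hx1 hx2 hy1 hxy
          have hnex : (T'.filter (fun v => x < v)).Nonempty := ⟨y, mem_filter.2 ⟨hyT, hxy⟩⟩
          obtain ⟨hvT, hxv, hvmin⟩ := nextIn_spec hnex
          have hv2 : nextIn T' x ≤ y := hvmin y hyT hxy
          exact hx2 (hconvex j x (nextIn T' x) y hx1 hy1 (le_of_lt hxv) hv2)
        intro u1 h1 u2 h2
        rw [mem_filter] at h1 h2
        rcases lt_trichotomy u1 u2 with hlt | heqq | hlt
        · exact absurd (key u1 u2 h1.1 h2.1 h1.2.1 h1.2.2 h2.2.1 hlt) (fun h => h)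
        · exact heqq
        · exact absurd (key u2 u1 h2.1 h1.1 h2.2.1 h2.2.2 h1.2.1 hlt) (fun h => h)
      calc (T'.filter (fun u => ¬ (memP u j ↔ memP (nextIn T' u) j))).card
          ≤ _ := card_le_card hsub
        _ ≤ _ + _ := card_union_le _ _
        _ ≤ 2 := by omega
    have hΔsum : (∑ u ∈ T', (Δfin u).card) ≤ 2 * m := by
      have hswap : (∑ u ∈ T', (Δfin u).card) = ∑ j : Fin m,
          (T'.filter (fun u => ¬ (memP u j ↔ memP (nextIn T' u) j))).card := by
        have h1 : ∀ u : ℝ ×ₗ ℤ, (Δfin u).card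
            = ∑ j : Fin m, (if ¬ (memP u j ↔ memP (nextIn T' u) j) then 1 else 0) := by
          intro u
          simp only [hΔdef]
          exact card_filter _ _
        have h2 : ∀ j : Fin m, (T'.filter (fun u => ¬ (memP u j ↔ memP (nextIn T' u) j))).card
            = ∑ u ∈ T', (if ¬ (memP u j ↔ memP (nextIn T' u) j) then 1 else 0) := by
          intro j
          exact card_filter _ _
        calc (∑ u ∈ T', (Δfin u).card)
            = ∑ u ∈ T', ∑ j : Fin m, (if ¬ (memP u j ↔ memP (nextIn T' u) j) then 1 else 0) :=
              sum_congr rfl (fun u _ => h1 u)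
          _ = ∑ j : Fin m, ∑ u ∈ T', (if ¬ (memP u j ↔ memP (nextIn T' u) j) then 1 else 0) :=
              sum_comm
          _ = ∑ j : Fin m, (T'.filter (fun u => ¬ (memP u j ↔ memP (nextIn T' u) j))).card :=
              sum_congr rfl (fun j _ => (h2 j).symm)
      rw [hswap]
      calc (∑ j : Fin m, (T'.filter (fun u => ¬ (memP u j ↔ memP (nextIn T' u) j))).card)
          ≤ ∑ _j : Fin m, 2 := sum_le_sum (fun j _ => hperj j)
        _ = 2 * m := by simp [mul_comm]
    have hTOKcard : TOK.card ≤ 2 * m * t := by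
      calc TOK.card ≤ ∑ u ∈ T', (((Δfin u) ×ˢ range t).image (fun z => (u, z.1, z.2))).card :=
            card_biUnion_le
        _ ≤ ∑ u ∈ T', (Δfin u).card * t := by
            refine sum_le_sum (fun u _ => ?_)
            calc (((Δfin u) ×ˢ range t).image (fun z => (u, z.1, z.2))).card
                ≤ ((Δfin u) ×ˢ range t).card := card_image_le
              _ = (Δfin u).card * t := by rw [card_product, card_range]
        _ = (∑ u ∈ T', (Δfin u).card) * t := by rw [sum_mul]
        _ ≤ (2 * m) * t := Nat.mul_le_mul_right _ hΔsum
    -- the token assignment for change points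
    have hkey : ∀ s : ((_ : Fin m) × (ℝ ×ₗ ℤ)), s ∈ CH → ∃ tok : (ℝ ×ₗ ℤ) × Fin m × ℕ,
        tok ∈ TOK ∧ tok.1 = s.2 ∧ memP tok.1 s.1 ∧ κc s.1 < κc tok.2.1 ∧
        ((stabAll tok.1).filter (fun z => κc s.1 < κc z ∧ κc z < κc tok.2.1)).card = tok.2.2 := by
      rintro ⟨j₀, u⟩ hs
      rw [hCHdef, mem_sigma] at hs
      obtain ⟨-, hu⟩ := hs
      simp only [hchdef, mem_filter] at hu
      obtain ⟨huC, hune, hOd⟩ := hu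
      have huT : u ∈ T' := by
        have h := huC
        simp only [hCdef, mem_filter] at h
        exact h.1
      have humem : memP u j₀ := by
        have h := huC
        simp only [hCdef, mem_filter] at h
        exact h.2
      have hvne : ((Cset j₀).filter (fun v => u < v)).Nonempty := by
        by_contra hemp
        exact hune (nextIn_eq_self hemp)
      obtain ⟨hvC, huv, hvmin⟩ := nextIn_spec hvne
      set v := nextIn (Cset j₀) u with hvdef
      have hvT : v ∈ T' := by
        have h := hvC
        simp only [hCdef, mem_filter] at h
        exact h.1
      have hvmem : memP v j₀ := by
        have h := hvC
        simp only [hCdef, mem_filter] at h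
        exact h.2
      have hvT' : nextIn T' u = v := by
        have hT'ne : (T'.filter (fun z => u < z)).Nonempty := ⟨v, mem_filter.2 ⟨hvT, huv⟩⟩
        obtain ⟨hv₀T, huv₀, hv₀min⟩ := nextIn_spec hT'ne
        have h1 : nextIn T' u ≤ v := hv₀min v hvT huv
        have h2 : memP (nextIn T' u) j₀ :=
          hconvex j₀ u (nextIn T' u) v humem hvmem (le_of_lt huv₀) h1
        have h3 : v ≤ nextIn T' u := hvmin _
          (by simp only [hCdef, mem_filter]; exact ⟨hv₀T, h2⟩) huv₀
        exact le_antisymm h1 h3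
      set Dab : Finset (Fin m) := ((stabAll u \ stabAll v) ∪ (stabAll v \ stabAll u)).filter
        (fun z => κc j₀ < κc z) with hDabdef
      have hstabne : stab j₀ u ≠ stab j₀ v := by
        intro hstabeq
        apply hOd
        simp only [hOdef, hGdef]
        rw [hstabeq]
      have hDabne : Dab.Nonempty := by
        by_contra hemp
        rw [not_nonempty_iff_eq_empty] at hemp
        apply hstabne
        ext z
        simp only [hstabdef, mem_filter]
        constructor
        · rintro ⟨hz1, hz2⟩
          refine ⟨?_, hz2⟩
          by_contra hzv
          have hzD : z ∈ Dab := by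
            simp only [hDabdef, mem_filter, mem_union, mem_sdiff]
            exact ⟨Or.inl ⟨hz1, hzv⟩, hz2⟩
          rw [hemp] at hzD
          exact notMem_empty z hzD
        · rintro ⟨hz1, hz2⟩
          refine ⟨?_, hz2⟩
          by_contra hzu
          have hzD : z ∈ Dab := by
            simp only [hDabdef, mem_filter, mem_union, mem_sdiff]
            exact ⟨Or.inr ⟨hz1, hzu⟩, hz2⟩
          rw [hemp] at hzD
          exact notMem_empty z hzD
      obtain ⟨Rf, hRfD, hRfmin⟩ := Dab.exists_min_image κc hDabne
      have hRfj₀ : κc j₀ < κc Rf := by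
        have h := hRfD
        simp only [hDabdef, mem_filter] at h
        exact h.2
      have hagree : (stab j₀ u).filter (fun z => κc z < κc Rf)
          = (stab j₀ v).filter (fun z => κc z < κc Rf) := by
        ext z
        simp only [hstabdef, mem_filter]
        constructor
        · rintro ⟨⟨hz1, hz2⟩, hz3⟩
          refine ⟨⟨?_, hz2⟩, hz3⟩
          by_contra hzv
          have hzD : z ∈ Dab := by
            simp only [hDabdef, mem_filter, mem_union, mem_sdiff]
            exact ⟨Or.inl ⟨hz1, hzv⟩, hz2⟩
          exact absurd hz3 (not_lt.2 (hRfmin z hzD))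
        · rintro ⟨⟨hz1, hz2⟩, hz3⟩
          refine ⟨⟨?_, hz2⟩, hz3⟩
          by_contra hzu
          have hzD : z ∈ Dab := by
            simp only [hDabdef, mem_filter, mem_union, mem_sdiff]
            exact ⟨Or.inr ⟨hz1, hzu⟩, hz2⟩
          exact absurd hz3 (not_lt.2 (hRfmin z hzD))
      set r := ((stab j₀ u).filter (fun z => κc z < κc Rf)).card with hrdef
      have hnr : ¬ (t - 1 ≤ r) := by
        intro hge
        apply hOd
        have hcu : t - 1 ≤ (stab j₀ u).card := by
          refine le_trans hge ?_
          rw [hrdef]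
          exact card_le_card (filter_subset _ _)
        have hcv : t - 1 ≤ (stab j₀ v).card := by
          have hge2 := hge
          rw [hrdef, hagree] at hge2
          exact le_trans hge2 (card_le_card (filter_subset _ _))
        have hG : Gfun j₀ u = Gfun j₀ v := by
          simp only [hGdef]
          refine botk_congr hκc_inj hagree ?_
          rw [← hrdef]
          exact hge
        simp only [hOdef]
        rw [if_pos hcu, if_pos hcv, hG]
      have hrt : r < t := by omega
      have hRfmem : Rf ∈ Δfin u := by
        simp only [hΔdef, mem_filter]
        refine ⟨mem_univ _, ?_⟩
        rw [hvT']
        have h := hRfD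
        simp only [hDabdef, mem_filter, mem_union, mem_sdiff, hstabAlldef,
          mem_univ, true_and] at h
        rcases h.1 with ⟨h1, h2⟩ | ⟨h1, h2⟩
        · intro hiff
          exact h2 (hiff.1 h1)
        · intro hiff
          exact h2 (hiff.2 h1)
      refine ⟨(u, Rf, r), ?_, rfl, humem, hRfj₀, ?_⟩
      · simp only [hTOKdef]
        exact mem_biUnion.2 ⟨u, huT,
          mem_image.2 ⟨(Rf, r), mem_product.2 ⟨hRfmem, mem_range.2 hrt⟩, rfl⟩⟩
      · rw [hrdef]
        dsimp only
        apply congrArg Finset.card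
        ext z
        simp only [hstabdef, mem_filter]
        constructor
        · rintro ⟨h1, h2, h3⟩
          exact ⟨⟨h1, h2⟩, h3⟩
        · rintro ⟨⟨h1, h2⟩, h3⟩
          exact ⟨h1, h2, h3⟩
    -- conclude via the injection
    rw [← hsum]
    rcases CH.eq_empty_or_nonempty with hCHe | hCHne
    · rw [hCHe, card_empty]
      omega
    · obtain ⟨s₀, hs₀⟩ := hCHne
      have hkey' : ∀ s : ((_ : Fin m) × (ℝ ×ₗ ℤ)), ∃ tok : (ℝ ×ₗ ℤ) × Fin m × ℕ,
          s ∈ CH → (tok ∈ TOK ∧ tok.1 = s.2 ∧ memP tok.1 s.1 ∧ κc s.1 < κc tok.2.1 ∧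
          ((stabAll tok.1).filter (fun z => κc s.1 < κc z ∧ κc z < κc tok.2.1)).card
            = tok.2.2) := by
        intro s
        by_cases hs : s ∈ CH
        · exact ⟨(hkey s hs).choose, fun _ => (hkey s hs).choose_spec⟩
        · exact ⟨(toLex ((0:ℝ),(0:ℤ)), s₀.1, 0), fun h => absurd h hs⟩
      choose Φ hΦ using hkey'
      have hmain : ∀ (j j' : Fin m) (tok : (ℝ ×ₗ ℤ) × Fin m × ℕ),
          memP tok.1 j' → κc j' < κc tok.2.1 →
          ((stabAll tok.1).filter (fun z => κc j < κc z ∧ κc z < κc tok.2.1)).card = tok.2.2 →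
          ((stabAll tok.1).filter (fun z => κc j' < κc z ∧ κc z < κc tok.2.1)).card = tok.2.2 →
          κc j < κc j' → False := by
        intro j j' tok hmj' hltj' hcj hcj' hjj'
        have hsub : insert j' ((stabAll tok.1).filter (fun z => κc j' < κc z ∧ κc z < κc tok.2.1))
            ⊆ (stabAll tok.1).filter (fun z => κc j < κc z ∧ κc z < κc tok.2.1) := by
          intro z hz
          rw [mem_insert] at hz
          rcases hz with rfl | hz
          · rw [mem_filter]
            refine ⟨?_, hjj', hltj'⟩
            simp only [hstabAlldef, mem_filter]
            exact ⟨mem_univ _, hmj'⟩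
          · rw [mem_filter] at hz ⊢
            exact ⟨hz.1, hjj'.trans hz.2.1, hz.2.2⟩
        have hnotmem : j' ∉ (stabAll tok.1).filter
            (fun z => κc j' < κc z ∧ κc z < κc tok.2.1) := by
          rw [mem_filter]
          rintro ⟨-, h, -⟩
          exact absurd h (lt_irrefl _)
        have hcard := card_le_card hsub
        rw [card_insert_of_notMem hnotmem, hcj, hcj'] at hcard
        omega
      have hinj : Set.InjOn Φ ↑CH := by
        intro s1 hs1 s2 hs2 heq
        rw [mem_coe] at hs1 hs2
        obtain ⟨ht1, he1, hm1, hlt1, hc1⟩ := hΦ s1 hs1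
        obtain ⟨ht2, he2, hm2, hlt2, hc2⟩ := hΦ s2 hs2
        rw [← heq] at he2 hm2 hlt2 hc2
        have h2nd : s1.2 = s2.2 := by rw [← he1, ← he2]
        have h1st : s1.1 = s2.1 := by
          by_contra hne
          have hκne : κc s1.1 ≠ κc s2.1 := fun e => hne (hκc_inj e)
          rcases hκne.lt_or_gt with hlt | hlt
          · exact hmain s1.1 s2.1 (Φ s1) hm2 hlt2 hc1 hc2 hlt
          · exact hmain s2.1 s1.1 (Φ s1) hm1 hlt1 hc2 hc1 hlt
        obtain ⟨a1, b1⟩ := s1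
        obtain ⟨a2, b2⟩ := s2
        simp only [] at h1st h2nd
        subst h1st
        subst h2nd
        rfl
      calc CH.card ≤ TOK.card :=
            card_le_card_of_injOn Φ (fun s hs => (hΦ s hs).1) hinj
        _ ≤ 2 * m * t := hTOKcard
  -- assemble
  have hE2 : Dset.card ≤ (g*t) * (m + 2*m*t) := by
    calc Dset.card ≤ Wits.card * (g*t) := hDcard
      _ ≤ TargetF.card * (g*t) := Nat.mul_le_mul_right _ hWitsT
      _ ≤ (m + 2*m*t) * (g*t) := by
          apply Nat.mul_le_mul_right
          calc TargetF.card ≤ m + ∑ j₀ : Fin m, (chSet j₀).card := hTargetcard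
            _ ≤ m + 2*m*t := Nat.add_le_add_left hchanges m
      _ = (g*t) * (m + 2*m*t) := Nat.mul_comm _ _
  have : Dset.card = (E.filter (fun p => deepP p)).card := by rw [hDdef]
  omega


/-- Lopsided Zarankiewicz bound for points vs. bottomless rectangles. -/
theorem points_bottomless_zarankiewicz :
    ∃ C : ℕ, ∀ (n m t g : ℕ), 1 ≤ t → 1 ≤ g →
      ∀ (P : Fin n → ℝ × ℝ) (B : Fin m → Set (ℝ × ℝ)),
      (∀ j, ∃ a b c : ℝ, a ≤ b ∧ B j = bottomless a b c) →
      (((¬ ∃ (S : Finset (Fin n)) (T : Finset (Fin m)), S.card = t ∧ T.card = g * t ∧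
            ∀ i ∈ S, ∀ j ∈ T, P i ∈ B j) →
          {p : Fin n × Fin m | P p.1 ∈ B p.2}.ncard ≤ C * (g * t ^ 2 * n + t * m)) ∧
       ((¬ ∃ (S : Finset (Fin n)) (T : Finset (Fin m)), S.card = g * t ∧ T.card = t ∧
            ∀ i ∈ S, ∀ j ∈ T, P i ∈ B j) →
          {p : Fin n × Fin m | P p.1 ∈ B p.2}.ncard ≤ C * (g * t ^ 2 * m + t * n))) := by
  classical
  use 5
  intro n m t g ht hg P B hB
  choose a b c hab hBj using hB
  have hmem : ∀ i j, P i ∈ B j ↔ a j ≤ (P i).1 ∧ (P i).1 ≤ b j ∧ (P i).2 ≤ c j := by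
    intro i j
    rw [hBj j]
    rfl
  have hset : {p : Fin n × Fin m | P p.1 ∈ B p.2}
      = ↑(univ.filter (fun p : Fin n × Fin m => P p.1 ∈ B p.2)) := by
    ext p
    simp
  have hncard : {p : Fin n × Fin m | P p.1 ∈ B p.2}.ncard
      = (univ.filter (fun p : Fin n × Fin m => P p.1 ∈ B p.2)).card := by
    rw [hset, Set.ncard_coe_finset]
  constructor
  · intro H
    rw [hncard]
    have h1 := part1 n m t g ht hg P B a b c hmem H
    have h2 : t * m + 2 * (g * t^2) * n ≤ 5 * (g * t ^ 2 * n + t * m) := by nlinarith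
    omega
  · intro H
    rw [hncard]
    have h1 := part2 n m t g ht hg P B a b c hmem H
    have h2 : t * n + (g*t) * (m + 2 * m * t) ≤ 5 * (g * t ^ 2 * m + t * n) := by nlinarith
    omega
end

section
/- Let A be a multiset of n points in ℝ² and B a multiset of m axis-parallel rectangles, and let b ≥ 2 be a parameter. If the bipartite intersection graph G(A,B) is K_{t,gt}-free (t on the side of A), then it has O(g·t²·n·log_b n + b·t·m) edges. -/
namespace PRZ

variable {n : ℕ}

/-- rank of `i` within `S` w.r.t. the key `yk` -/
def yrk (yk : Fin n → ℕ) (S : Finset (Fin n)) (i : Fin n) : ℕ :=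
  (S.filter (fun u => yk u < yk i)).card

/-- the window of `t` consecutive (by `yk`-rank) elements of `S` starting at rank `a` -/
def wnd (yk : Fin n → ℕ) (t : ℕ) (S : Finset (Fin n)) (a : ℕ) : Finset (Fin n) :=
  S.filter (fun i => a ≤ yrk yk S i ∧ yrk yk S i < a + t)

def YConvex (yk : Fin n → ℕ) (C : Finset (Fin n)) : Prop :=
  ∀ i1 i2 i3 : Fin n, yk i1 ≤ yk i2 → yk i2 ≤ yk i3 → i1 ∈ C → i3 ∈ C → i2 ∈ C

section rank

variable (yk : Fin n → ℕ)

lemma yrk_lt_card {S : Finset (Fin n)} {i : Fin n} (hi : i ∈ S) : yrk yk S i < S.card := by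
  have h : S.filter (fun u => yk u < yk i) ⊆ S.erase i := by
    intro u hu
    simp only [Finset.mem_filter] at hu
    exact Finset.mem_erase.2 ⟨fun h => by simp [h] at hu, hu.1⟩
  calc yrk yk S i ≤ (S.erase i).card := Finset.card_le_card h
    _ < S.card := by
        rw [Finset.card_erase_of_mem hi]
        exact Nat.sub_lt (Finset.card_pos.2 ⟨i, hi⟩) one_pos

lemma yrk_mono {S : Finset (Fin n)} {a i : Fin n} (h : yk a ≤ yk i) :
    yrk yk S a ≤ yrk yk S i := by
  apply Finset.card_le_card
  intro u hu
  simp only [Finset.mem_filter] at hu ⊢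
  exact ⟨hu.1, lt_of_lt_of_le hu.2 h⟩

lemma yrk_strict {S : Finset (Fin n)} {a i : Fin n} (ha : a ∈ S) (h : yk a < yk i) :
    yrk yk S a < yrk yk S i := by
  apply Finset.card_lt_card
  constructor
  · intro u hu
    simp only [Finset.mem_filter] at hu ⊢
    exact ⟨hu.1, lt_trans hu.2 h⟩
  · intro hsub
    have : a ∈ S.filter (fun u => yk u < yk i) := Finset.mem_filter.2 ⟨ha, h⟩
    have := hsub this
    simp only [Finset.mem_filter] at this
    exact lt_irrefl _ this.2

/-- splitting identity for ranks -/
lemma yrk_split {S : Finset (Fin n)} {a i : Fin n} (h : yk a ≤ yk i) :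
    yrk yk S i = yrk yk S a + (S.filter (fun u => yk a ≤ yk u ∧ yk u < yk i)).card := by
  rw [yrk, yrk, ← Finset.card_union_of_disjoint]
  · congr 1
    ext u
    simp only [Finset.mem_union, Finset.mem_filter]
    constructor
    · rintro ⟨hu, hlt⟩
      rcases lt_or_ge (yk u) (yk a) with h1 | h1
      · exact Or.inl ⟨hu, h1⟩
      · exact Or.inr ⟨hu, h1, hlt⟩
    · rintro (⟨hu, h1⟩ | ⟨hu, h1, h2⟩)
      · exact ⟨hu, lt_of_lt_of_le h1 h⟩
      · exact ⟨hu, h2⟩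
  · rw [Finset.disjoint_filter]
    rintro u _ h1 ⟨h2, _⟩
    exact absurd h1 (not_lt.2 h2)

lemma yrk_injOn (hyk : Function.Injective yk) {S : Finset (Fin n)} :
    Set.InjOn (yrk yk S) S := by
  intro a ha i hi hao
  by_contra hne
  rcases lt_trichotomy (yk a) (yk i) with h | h | h
  · exact absurd hao (Nat.ne_of_lt (yrk_strict yk ha h))
  · exact hne (hyk h)
  · exact absurd hao.symm (Nat.ne_of_lt (yrk_strict yk hi h))

lemma yrk_image (hyk : Function.Injective yk) :
    ∀ (S : Finset (Fin n)), S.image (yrk yk S) = Finset.range S.card := by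
  intro S
  induction S using Finset.strongInduction with
  | _ S ih =>
    rcases S.eq_empty_or_nonempty with rfl | hne
    · simp
    obtain ⟨M, hM, hmax⟩ := S.exists_max_image yk hne
    have hMf : S.filter (fun u => yk u < yk M) = S.erase M := by
      ext u
      simp only [Finset.mem_filter, Finset.mem_erase]
      constructor
      · rintro ⟨hu, hlt⟩
        exact ⟨fun h => by subst h; exact lt_irrefl _ hlt, hu⟩
      · rintro ⟨hne', hu⟩
        exact ⟨hu, lt_of_le_of_ne (hmax u hu) (fun h => hne' (hyk h))⟩
    have hrkM : yrk yk S M = S.card - 1 := by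
      rw [yrk, hMf, Finset.card_erase_of_mem hM]
    have herase : ∀ i ∈ S.erase M, yrk yk (S.erase M) i = yrk yk S i := by
      intro i hi
      have hiS : i ∈ S := Finset.mem_of_mem_erase hi
      unfold yrk
      congr 1
      ext u
      simp only [Finset.mem_filter, Finset.mem_erase]
      constructor
      · rintro ⟨⟨_, hu⟩, hlt⟩; exact ⟨hu, hlt⟩
      · rintro ⟨hu, hlt⟩
        refine ⟨⟨fun h => ?_, hu⟩, hlt⟩
        subst h
        exact absurd (hmax i hiS) (not_le.2 hlt)
    have h1 : S.image (yrk yk S) = (insert M (S.erase M)).image (yrk yk S) := by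
      rw [Finset.insert_erase hM]
    rw [Finset.image_insert] at h1
    have h2 : (S.erase M).image (yrk yk S) = (S.erase M).image (yrk yk (S.erase M)) :=
      Finset.image_congr (fun i hi => (herase i hi).symm)
    rw [h1, h2, hrkM, ih (S.erase M) (Finset.erase_ssubset hM), Finset.card_erase_of_mem hM]
    have hpos : 0 < S.card := Finset.card_pos.2 hne
    have hc : S.card = (S.card - 1) + 1 := (Nat.succ_pred_eq_of_pos hpos).symm
    conv_rhs => rw [hc]
    rw [Finset.range_add_one]

lemma exists_yrk (hyk : Function.Injective yk) {S : Finset (Fin n)} {r : ℕ} (hr : r < S.card) :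
    ∃ i ∈ S, yrk yk S i = r := by
  have : r ∈ S.image (yrk yk S) := by
    rw [yrk_image yk hyk]
    exact Finset.mem_range.2 hr
  simpa using this

lemma card_wnd (hyk : Function.Injective yk) {t : ℕ} {S : Finset (Fin n)} {a : ℕ}
    (h : a + t ≤ S.card) : (wnd yk t S a).card = t := by
  have hbij : (wnd yk t S a).card =
      ((Finset.range S.card).filter (fun r => a ≤ r ∧ r < a + t)).card := by
    apply Finset.card_bij (fun i _ => yrk yk S i)
    · intro i hi
      simp only [wnd, Finset.mem_filter] at hi
      simp only [Finset.mem_filter, Finset.mem_range]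
      exact ⟨yrk_lt_card yk hi.1, hi.2⟩
    · intro i hi i' hi' he
      simp only [wnd, Finset.mem_filter] at hi hi'
      exact yrk_injOn yk hyk hi.1 hi'.1 he
    · intro r hr
      simp only [Finset.mem_filter, Finset.mem_range] at hr
      obtain ⟨i, hiS, hir⟩ := exists_yrk yk hyk hr.1
      exact ⟨i, Finset.mem_filter.2 ⟨hiS, by rw [hir]; exact hr.2⟩, hir⟩
  rw [hbij]
  have heq : (Finset.range S.card).filter (fun r => a ≤ r ∧ r < a + t) =
      Finset.Ico a (a + t) := by
    ext r
    simp only [Finset.mem_filter, Finset.mem_range, Finset.mem_Ico]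
    constructor
    · rintro ⟨_, h1, h2⟩; exact ⟨h1, h2⟩
    · rintro ⟨h1, h2⟩; exact ⟨lt_of_lt_of_le h2 h, h1, h2⟩
  rw [heq, Nat.card_Ico]
  omega

end rank

section transfer

variable (yk : Fin n → ℕ)

/-- rank transfer: if `S = U ∩ C` with `C` convex, ranks in `U` of elements of `S`
are ranks in `S` shifted by the `U`-rank of the `S`-minimum. -/
lemma yrk_transfer {U C S : Finset (Fin n)} (hS : S = U ∩ C) (hC : YConvex yk C)
    {m0 i : Fin n} (hm0 : m0 ∈ S) (h0 : yrk yk S m0 = 0) (hi : i ∈ S) :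
    yrk yk U i = yrk yk U m0 + yrk yk S i := by
  have hmin : ∀ u ∈ S, yk m0 ≤ yk u := by
    intro u hu
    by_contra hlt
    have := yrk_strict yk hu (not_le.1 hlt)
    omega
  have hmi : yk m0 ≤ yk i := hmin i hi
  rw [yrk_split yk hmi]
  congr 1
  show (U.filter (fun u => yk m0 ≤ yk u ∧ yk u < yk i)).card = yrk yk S i
  unfold yrk
  congr 1
  ext u
  simp only [Finset.mem_filter]
  constructor
  · rintro ⟨hu, h1, h2⟩
    have huC : u ∈ C := by
      have hm0C : m0 ∈ C := by rw [hS] at hm0; exact (Finset.mem_inter.1 hm0).2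
      have hiC : i ∈ C := by rw [hS] at hi; exact (Finset.mem_inter.1 hi).2
      exact hC m0 u i h1 (le_of_lt h2) hm0C hiC
    exact ⟨by rw [hS]; exact Finset.mem_inter.2 ⟨hu, huC⟩, h2⟩
  · rintro ⟨hu, h2⟩
    have huU : u ∈ U := by rw [hS] at hu; exact (Finset.mem_inter.1 hu).1
    exact ⟨huU, hmin u hu, h2⟩

/-- a window of `S = U ∩ C` is a window of `U`. -/
lemma wnd_transfer (hyk : Function.Injective yk) {t : ℕ}
    {U C S : Finset (Fin n)} (hS : S = U ∩ C) (hC : YConvex yk C)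
    {m0 : Fin n} (hm0 : m0 ∈ S) (h0 : yrk yk S m0 = 0) {k : ℕ} (hk : k + t ≤ S.card) :
    wnd yk t S k = wnd yk t U (yrk yk U m0 + k) := by
  have hSU : S ⊆ U := by rw [hS]; exact Finset.inter_subset_left
  set R := yrk yk U m0 with hR
  -- S as a rank-window of U
  have hSF : ∀ u ∈ U, R ≤ yrk yk U u → yrk yk U u < R + S.card → u ∈ S := by
    intro u hu h1 h2
    -- cardinality argument
    set F := U.filter (fun v => R ≤ yrk yk U v ∧ yrk yk U v < R + S.card) with hF
    have hSsubF : S ⊆ F := by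
      intro v hv
      refine Finset.mem_filter.2 ⟨hSU hv, ?_⟩
      rw [yrk_transfer yk hS hC hm0 h0 hv]
      have := yrk_lt_card yk hv
      omega
    have hFcard : F.card ≤ S.card := by
      have hinj : Set.InjOn (yrk yk U) F := fun a ha b hb =>
        yrk_injOn yk hyk (Finset.mem_filter.1 ha).1 (Finset.mem_filter.1 hb).1
      have hmap : ∀ v ∈ F, yrk yk U v ∈ Finset.Ico R (R + S.card) := by
        intro v hv
        have := (Finset.mem_filter.1 hv).2
        exact Finset.mem_Ico.2 this
      calc F.card ≤ (Finset.Ico R (R + S.card)).card :=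
            Finset.card_le_card_of_injOn _ hmap hinj
        _ = S.card := by rw [Nat.card_Ico]; omega
    have hFS : F = S := (Finset.eq_of_subset_of_card_le hSsubF hFcard).symm
    rw [← hFS]
    exact Finset.mem_filter.2 ⟨hu, h1, h2⟩
  ext i
  simp only [wnd, Finset.mem_filter]
  constructor
  · rintro ⟨hiS, h1, h2⟩
    have := yrk_transfer yk hS hC hm0 h0 hiS
    exact ⟨hSU hiS, by omega, by omega⟩
  · rintro ⟨hiU, h1, h2⟩
    have hiS : i ∈ S := hSF i hiU (by omega) (by omega)
    have := yrk_transfer yk hS hC hm0 h0 hiS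
    exact ⟨hiS, by omega, by omega⟩

/-- master form: a window of `S = U ∩ C` containing `q` is `wnd yk t U (yrk yk U q - j)`
for some `j < t`. -/
lemma wnd_master (hyk : Function.Injective yk) {t : ℕ} (ht : 1 ≤ t)
    {U C S : Finset (Fin n)} (hS : S = U ∩ C) (hC : YConvex yk C)
    {k : ℕ} (hk : k + t ≤ S.card) {q : Fin n} (hq : q ∈ wnd yk t S k) :
    ∃ j < t, wnd yk t S k = wnd yk t U (yrk yk U q - j) := by
  have hScard : 0 < S.card := by omega
  obtain ⟨m0, hm0, h0⟩ := exists_yrk yk hyk hScard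
  have hqS : q ∈ S := (Finset.mem_filter.1 hq).1
  have hqrk := (Finset.mem_filter.1 hq).2
  have htr := yrk_transfer yk hS hC hm0 h0 hqS
  refine ⟨yrk yk S q - k, by omega, ?_⟩
  rw [wnd_transfer yk hyk hS hC hm0 h0 hk]
  congr 1
  omega

/-- window restriction: a full window of `S` contained in `S'' ⊆ S` is a full window of `S''`. -/
lemma wnd_restrict (hyk : Function.Injective yk) {t : ℕ} (ht : 1 ≤ t)
    {S S'' T : Finset (Fin n)} {k : ℕ} (hT : T = wnd yk t S k) (hk : k + t ≤ S.card)
    (hTs : T ⊆ S'') (hs : S'' ⊆ S) :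
    ∃ k', k' + t ≤ S''.card ∧ T = wnd yk t S'' k' := by
  obtain ⟨m, hmS, hmrk⟩ := exists_yrk yk hyk (show k < S.card by omega)
  obtain ⟨M, hMS, hMrk⟩ := exists_yrk yk hyk (show k + t - 1 < S.card by omega)
  have hmT : m ∈ T := by
    rw [hT]; exact Finset.mem_filter.2 ⟨hmS, by omega, by omega⟩
  have hMT : M ∈ T := by
    rw [hT]; exact Finset.mem_filter.2 ⟨hMS, by omega, by omega⟩
  have hTcard : T.card = t := by rw [hT]; exact card_wnd yk hyk hk
  -- all elements of T lie between m and M in yk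
  have hbounds : ∀ i ∈ T, yk m ≤ yk i ∧ yk i ≤ yk M := by
    intro i hi
    rw [hT] at hi
    have hiS := (Finset.mem_filter.1 hi).1
    have hirk := (Finset.mem_filter.1 hi).2
    constructor
    · by_contra hlt
      have := yrk_strict yk (S := S) hiS (not_le.1 hlt)
      omega
    · by_contra hlt
      have := yrk_strict yk (S := S) hMS (not_le.1 hlt)
      omega
  set k' := yrk yk S'' m with hk'
  -- the count of S''-elements strictly between m and M (in yk, left-closed) is ≥ t - 1
  have hMrk'' : k' + (t - 1) ≤ yrk yk S'' M := by
    have hsplit := yrk_split yk (S := S'') (hbounds M hMT).1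
    have hsub : T.erase M ⊆ S''.filter (fun u => yk m ≤ yk u ∧ yk u < yk M) := by
      intro u hu
      have huT := Finset.mem_of_mem_erase hu
      have huM := Finset.ne_of_mem_erase hu
      refine Finset.mem_filter.2 ⟨hTs huT, (hbounds u huT).1, ?_⟩
      have := (hbounds u huT).2
      exact lt_of_le_of_ne this (fun h => huM (hyk h))
    have := Finset.card_le_card hsub
    rw [Finset.card_erase_of_mem hMT, hTcard] at this
    omega
  have hk't : k' + t ≤ S''.card := by
    have := yrk_lt_card yk (hTs hMT)
    omega
  refine ⟨k', hk't, ?_⟩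
  ext i
  constructor
  · intro hi
    have hiS'' := hTs hi
    refine Finset.mem_filter.2 ⟨hiS'', yrk_mono yk (hbounds i hi).1, ?_⟩
    -- upper bound via split in S'' compared with split in S
    have hsplit'' := yrk_split yk (S := S'') (hbounds i hi).1
    have hsplitS := yrk_split yk (S := S) (hbounds i hi).1
    have hcardle : (S''.filter (fun u => yk m ≤ yk u ∧ yk u < yk i)).card ≤
        (S.filter (fun u => yk m ≤ yk u ∧ yk u < yk i)).card :=
      Finset.card_le_card (fun u hu => Finset.mem_filter.2
        ⟨hs (Finset.mem_filter.1 hu).1, (Finset.mem_filter.1 hu).2⟩)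
    rw [hT] at hi
    have hirk := (Finset.mem_filter.1 hi).2
    omega
  · intro hi
    have hiS'' := (Finset.mem_filter.1 hi).1
    have hirk'' := (Finset.mem_filter.1 hi).2
    have hiS := hs hiS''
    rcases lt_or_ge (yk i) (yk m) with hlt | hge
    · exfalso
      have := yrk_strict yk (S := S'') hiS'' hlt
      omega
    rcases lt_or_ge (yk M) (yk i) with hlt2 | hle2
    · exfalso
      have h1 := yrk_strict yk (S := S'') (hTs hMT) hlt2
      omega
    -- m ≤ᵧ i ≤ᵧ M, so the S-rank of i is within the window
    have h1 := yrk_mono yk (S := S) hge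
    have h2 := yrk_mono yk (S := S) hle2
    rw [hT]
    exact Finset.mem_filter.2 ⟨hiS, by omega, by omega⟩

end transfer

section canon

/-- suffix of the base-`b^e` block of `q`, starting at `q` -/
def suffF (b e : ℕ) (q : Fin n) : Finset (Fin n) :=
  Finset.univ.filter (fun i => (i : ℕ) / b ^ e = (q : ℕ) / b ^ e ∧ (q : ℕ) ≤ (i : ℕ))

def prefF (b e : ℕ) (q : Fin n) : Finset (Fin n) :=
  Finset.univ.filter (fun i => (i : ℕ) / b ^ e = (q : ℕ) / b ^ e ∧ (i : ℕ) ≤ (q : ℕ))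

def canonA (yk : Fin n → ℕ) (t b e : ℕ) (q : Fin n) (j : ℕ) : Finset (Fin n) :=
  wnd yk t (suffF b e q) (yrk yk (suffF b e q) q - j)

def canonP (yk : Fin n → ℕ) (t b e : ℕ) (q : Fin n) (j : ℕ) : Finset (Fin n) :=
  wnd yk t (prefF b e q) (yrk yk (prefF b e q) q - j)

variable (yk : Fin n → ℕ)

lemma charge_suff (hyk : Function.Injective yk) {t : ℕ} (ht : 1 ≤ t) {b e : ℕ}
    {C V S : Finset (Fin n)} (hC : YConvex yk C) (hS : S = V ∩ C)
    {blk : ℕ} (hblk : ∀ i ∈ S, (i : ℕ) / b ^ e = blk)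
    (hU : ∀ q ∈ S, (suffF b e q) ∩ C ⊆ S) :
    ∃ G : Finset (Finset (Fin n)), G.card = S.card - (t - 1) ∧
      ∀ T ∈ G, (∃ q : Fin n, ∃ j < t, T = canonA yk t b e q j) ∧ T ⊆ S ∧ T.card = t := by
  refine ⟨(Finset.range (S.card - (t - 1))).image (wnd yk t S), ?_, ?_⟩
  · rw [Finset.card_image_of_injOn, Finset.card_range]
    intro k hk k' hk' he
    simp only [Finset.coe_range, Set.mem_Iio] at hk hk'
    have key : ∀ a b : ℕ, a < S.card - (t - 1) → a < b → wnd yk t S a ≠ wnd yk t S b := by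
      intro a c ha hab heq
      obtain ⟨i, hiS, hirk⟩ := exists_yrk yk hyk (show a < S.card by omega)
      have h1 : i ∈ wnd yk t S a := Finset.mem_filter.2 ⟨hiS, by omega, by omega⟩
      rw [heq] at h1
      have := (Finset.mem_filter.1 h1).2
      omega
    rcases lt_trichotomy k k' with hlt | he' | hlt
    · exact absurd he (key k k' hk hlt)
    · exact he'
    · exact absurd he.symm (key k' k hk' hlt)
  · intro T hT
    obtain ⟨k, hk, rfl⟩ := Finset.mem_image.1 hT
    simp only [Finset.mem_range] at hk
    have hkt : k + t ≤ S.card := by omega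
    have hTS : wnd yk t S k ⊆ S := Finset.filter_subset _ _
    have hTcard : (wnd yk t S k).card = t := card_wnd yk hyk hkt
    refine ⟨?_, hTS, hTcard⟩
    have hTne : (wnd yk t S k).Nonempty := Finset.card_pos.1 (by omega)
    set q := (wnd yk t S k).min' hTne with hq
    have hqT : q ∈ wnd yk t S k := Finset.min'_mem _ _
    have hqS : q ∈ S := hTS hqT
    have hTsub : wnd yk t S k ⊆ (suffF b e q) ∩ C := by
      intro i hi
      refine Finset.mem_inter.2 ⟨?_, ?_⟩
      · refine Finset.mem_filter.2 ⟨Finset.mem_univ _, ?_, ?_⟩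
        · rw [hblk i (hTS hi), hblk q hqS]
        · exact Finset.min'_le _ i hi
      · rw [hS] at *
        exact (Finset.mem_inter.1 (hTS hi)).2
    have hsub2 : (suffF b e q) ∩ C ⊆ S := hU q hqS
    obtain ⟨k', hk't, hTk'⟩ := wnd_restrict yk hyk ht rfl hkt hTsub hsub2
    have hq' : q ∈ wnd yk t ((suffF b e q) ∩ C) k' := by rw [← hTk']; exact hqT
    obtain ⟨j, hjt, hwnd⟩ := wnd_master yk hyk ht rfl hC hk't hq'
    exact ⟨q, j, hjt, by rw [hTk', hwnd]; rfl⟩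

lemma charge_pref (hyk : Function.Injective yk) {t : ℕ} (ht : 1 ≤ t) {b e : ℕ}
    {C V S : Finset (Fin n)} (hC : YConvex yk C) (hS : S = V ∩ C)
    {blk : ℕ} (hblk : ∀ i ∈ S, (i : ℕ) / b ^ e = blk)
    (hU : ∀ q ∈ S, (prefF b e q) ∩ C ⊆ S) :
    ∃ G : Finset (Finset (Fin n)), G.card = S.card - (t - 1) ∧
      ∀ T ∈ G, (∃ q : Fin n, ∃ j < t, T = canonP yk t b e q j) ∧ T ⊆ S ∧ T.card = t := by
  refine ⟨(Finset.range (S.card - (t - 1))).image (wnd yk t S), ?_, ?_⟩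
  · rw [Finset.card_image_of_injOn, Finset.card_range]
    intro k hk k' hk' he
    simp only [Finset.coe_range, Set.mem_Iio] at hk hk'
    have key : ∀ a b : ℕ, a < S.card - (t - 1) → a < b → wnd yk t S a ≠ wnd yk t S b := by
      intro a c ha hab heq
      obtain ⟨i, hiS, hirk⟩ := exists_yrk yk hyk (show a < S.card by omega)
      have h1 : i ∈ wnd yk t S a := Finset.mem_filter.2 ⟨hiS, by omega, by omega⟩
      rw [heq] at h1
      have := (Finset.mem_filter.1 h1).2
      omega
    rcases lt_trichotomy k k' with hlt | he' | hlt
    · exact absurd he (key k k' hk hlt)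
    · exact he'
    · exact absurd he.symm (key k' k hk' hlt)
  · intro T hT
    obtain ⟨k, hk, rfl⟩ := Finset.mem_image.1 hT
    simp only [Finset.mem_range] at hk
    have hkt : k + t ≤ S.card := by omega
    have hTS : wnd yk t S k ⊆ S := Finset.filter_subset _ _
    have hTcard : (wnd yk t S k).card = t := card_wnd yk hyk hkt
    refine ⟨?_, hTS, hTcard⟩
    have hTne : (wnd yk t S k).Nonempty := Finset.card_pos.1 (by omega)
    set q := (wnd yk t S k).max' hTne with hq
    have hqT : q ∈ wnd yk t S k := Finset.max'_mem _ _
    have hqS : q ∈ S := hTS hqT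
    have hTsub : wnd yk t S k ⊆ (prefF b e q) ∩ C := by
      intro i hi
      refine Finset.mem_inter.2 ⟨?_, ?_⟩
      · refine Finset.mem_filter.2 ⟨Finset.mem_univ _, ?_, ?_⟩
        · rw [hblk i (hTS hi), hblk q hqS]
        · exact Finset.le_max' _ i hi
      · rw [hS] at *
        exact (Finset.mem_inter.1 (hTS hi)).2
    have hsub2 : (prefF b e q) ∩ C ⊆ S := hU q hqS
    obtain ⟨k', hk't, hTk'⟩ := wnd_restrict yk hyk ht rfl hkt hTsub hsub2
    have hq' : q ∈ wnd yk t ((prefF b e q) ∩ C) k' := by rw [← hTk']; exact hqT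
    obtain ⟨j, hjt, hwnd⟩ := wnd_master yk hyk ht rfl hC hk't hq'
    exact ⟨q, j, hjt, by rw [hTk', hwnd]; rfl⟩

end canon

section core

lemma core {n m t g b L : ℕ} (ht : 1 ≤ t) (hg : 1 ≤ g) (hb : 2 ≤ b) (hL : n ≤ b ^ L)
    (yk : Fin n → ℕ) (hyk : Function.Injective yk)
    (N A C : Fin m → Finset (Fin n))
    (hN : ∀ j, N j = A j ∩ C j)
    (hA : ∀ j, ∀ i1 i2 i3 : Fin n, i1 ≤ i2 → i2 ≤ i3 → i1 ∈ A j → i3 ∈ A j → i2 ∈ A j)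
    (hC : ∀ j, YConvex yk (C j))
    (hK : ∀ (S : Finset (Fin n)) (T : Finset (Fin m)), S.card = t → T.card = g * t →
        ¬(∀ i ∈ S, ∀ j ∈ T, i ∈ N j)) :
    ∑ j, (N j).card ≤ 2 * (g * t) * t * n * (L + 1) + ((t - 1) * b + 1) * m := by
  classical
  set CanA : Finset (Finset (Fin n)) :=
    ((Finset.range (L + 1) ×ˢ (Finset.univ : Finset (Fin n)) ×ˢ Finset.range t).image
      (fun p => canonA yk t b p.1 p.2.1 p.2.2)).filter (fun T => T.card = t) with hCanA
  set CanP : Finset (Finset (Fin n)) :=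
    ((Finset.range (L + 1) ×ˢ (Finset.univ : Finset (Fin n)) ×ˢ Finset.range t).image
      (fun p => canonP yk t b p.1 p.2.1 p.2.2)).filter (fun T => T.card = t) with hCanP
  have hCanAcard : CanA.card ≤ (L + 1) * (n * t) := by
    calc CanA.card ≤ ((Finset.range (L + 1) ×ˢ (Finset.univ : Finset (Fin n)) ×ˢ
          Finset.range t).image (fun p => canonA yk t b p.1 p.2.1 p.2.2)).card :=
          Finset.card_filter_le _ _
      _ ≤ (Finset.range (L + 1) ×ˢ (Finset.univ : Finset (Fin n)) ×ˢ Finset.range t).card :=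
          Finset.card_image_le
      _ = (L + 1) * (n * t) := by
          simp [Finset.card_product]
  have hCanPcard : CanP.card ≤ (L + 1) * (n * t) := by
    calc CanP.card ≤ ((Finset.range (L + 1) ×ˢ (Finset.univ : Finset (Fin n)) ×ˢ
          Finset.range t).image (fun p => canonP yk t b p.1 p.2.1 p.2.2)).card :=
          Finset.card_filter_le _ _
      _ ≤ (Finset.range (L + 1) ×ˢ (Finset.univ : Finset (Fin n)) ×ˢ Finset.range t).card :=
          Finset.card_image_le
      _ = (L + 1) * (n * t) := by
          simp [Finset.card_product]
  -- each canonical t-set is contained in at most g*t - 1 of the N j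
  have hcount : ∀ T : Finset (Fin n), T.card = t →
      (Finset.univ.filter (fun j => T ⊆ N j)).card ≤ g * t - 1 := by
    intro T hT
    by_contra hcon
    have hge : g * t ≤ (Finset.univ.filter (fun j => T ⊆ N j)).card := by
      have hgt : 1 ≤ g * t := Nat.one_le_iff_ne_zero.2 (by positivity)
      omega
    obtain ⟨J, hJsub, hJcard⟩ := Finset.exists_subset_card_eq hge
    exact hK T J hT hJcard (fun i hi j hj => (Finset.mem_filter.1 (hJsub hj)).2 hi)
  have hglobal : ∀ (Can : Finset (Finset (Fin n))), (∀ T ∈ Can, T.card = t) →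
      ∑ j, ((Can.filter (fun T => T ⊆ N j)).card) ≤ Can.card * (g * t - 1) := by
    intro Can hcard
    have h1 : ∀ j : Fin m, (Can.filter (fun T => T ⊆ N j)).card =
        ∑ T ∈ Can, if T ⊆ N j then 1 else 0 := by
      intro j; rw [Finset.card_filter]
    calc ∑ j, ((Can.filter (fun T => T ⊆ N j)).card)
        = ∑ j, ∑ T ∈ Can, if T ⊆ N j then 1 else 0 := by
          exact Finset.sum_congr rfl (fun j _ => h1 j)
      _ = ∑ T ∈ Can, ∑ j, if T ⊆ N j then 1 else 0 := Finset.sum_comm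
      _ ≤ ∑ _T ∈ Can, (g * t - 1) := by
          apply Finset.sum_le_sum
          intro T hT
          have : ∑ j, (if T ⊆ N j then 1 else 0) =
              (Finset.univ.filter (fun j => T ⊆ N j)).card := (Finset.card_filter _ _).symm
          rw [this]
          exact hcount T (hcard T hT)
      _ = Can.card * (g * t - 1) := by rw [Finset.sum_const, smul_eq_mul]
  -- per-rectangle bound
  have hperj : ∀ j, (N j).card ≤ (CanA.filter (fun T => T ⊆ N j)).card +
      (CanP.filter (fun T => T ⊆ N j)).card + ((t - 1) * b + 1) := by
    intro j
    rcases (N j).eq_empty_or_nonempty with he | hne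
    · simp [he]
    set lo := (N j).min' hne with hlo
    set hi := (N j).max' hne with hhi
    by_cases hlh : (lo : ℕ) = (hi : ℕ)
    · -- single point
      have hsub : N j ⊆ {lo} := by
        intro i hi'
        have h1 : lo ≤ i := (N j).min'_le i hi'
        have h2 : i ≤ hi := (N j).le_max' i hi'
        rw [Fin.le_def] at h1 h2
        exact Finset.mem_singleton.2 (Fin.ext (by omega))
      have := Finset.card_le_card hsub
      simp only [Finset.card_singleton] at this
      omega
    -- split level
    set Pr : ℕ → Prop := fun ℓ => (lo : ℕ) / b ^ (L - ℓ) = (hi : ℕ) / b ^ (L - ℓ) with hPr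
    have hP0 : Pr 0 := by
      show (lo : ℕ) / b ^ (L - 0) = (hi : ℕ) / b ^ (L - 0)
      rw [Nat.sub_zero, Nat.div_eq_of_lt (lt_of_lt_of_le lo.isLt hL),
        Nat.div_eq_of_lt (lt_of_lt_of_le hi.isLt hL)]
    set ℓ := Nat.findGreatest Pr L with hℓdef
    have hPl : (lo : ℕ) / b ^ (L - ℓ) = (hi : ℕ) / b ^ (L - ℓ) :=
      Nat.findGreatest_spec (P := Pr) (Nat.zero_le L) hP0
    have hlL : ℓ ≤ L := Nat.findGreatest_le L
    have hneL : ℓ ≠ L := by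
      intro h
      rw [h, Nat.sub_self, pow_zero, Nat.div_one, Nat.div_one] at hPl
      exact hlh hPl
    have hPS : ¬ ((lo : ℕ) / b ^ (L - (ℓ + 1)) = (hi : ℕ) / b ^ (L - (ℓ + 1))) :=
      Nat.findGreatest_is_greatest (P := Pr) (Nat.lt_succ_self ℓ) (by omega)
    set e := L - ℓ - 1 with he_def
    set w := b ^ e with hw_def
    have hw : 0 < w := pow_pos (by omega) e
    have hLl : L - ℓ = e + 1 := by omega
    have hLS : L - (ℓ + 1) = e := by omega
    rw [hLl] at hPl
    rw [hLS] at hPS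
    have hPl' : (lo : ℕ) / (w * b) = (hi : ℕ) / (w * b) := by
      rw [← pow_succ]; exact hPl
    set c1 := (lo : ℕ) / w with hc1
    set c2 := (hi : ℕ) / w with hc2
    have hlohi : (lo : ℕ) ≤ (hi : ℕ) := by
      have := (N j).min'_le hi ((N j).max'_mem hne)
      rwa [Fin.le_def] at this
    have hc12 : c1 < c2 := lt_of_le_of_ne (Nat.div_le_div_right hlohi) hPS
    have hpar : c1 / b = c2 / b := by
      rw [hc1, hc2, Nat.div_div_eq_div_mul, Nat.div_div_eq_div_mul]
      exact hPl'
    have hc2b : c2 < c1 + b := by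
      have h1 := Nat.div_add_mod c2 b
      have h2 : c2 % b < b := Nat.mod_lt _ (by omega)
      have h3 : b * (c2 / b) ≤ c1 := by
        rw [← hpar]
        calc b * (c1 / b) = c1 / b * b := Nat.mul_comm _ _
          _ ≤ c1 := Nat.div_mul_le_self c1 b
      omega
    -- fiber decomposition
    set Sc : ℕ → Finset (Fin n) := fun cc => (N j).filter (fun i => (i : ℕ) / w = cc)
      with hSc_def
    have hcover : ∀ i ∈ N j, (i : ℕ) / w ∈ Finset.Icc c1 c2 := by
      intro i hi'
      have h1 : lo ≤ i := (N j).min'_le i hi'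
      have h2 : i ≤ hi := (N j).le_max' i hi'
      rw [Fin.le_def] at h1 h2
      exact Finset.mem_Icc.2 ⟨Nat.div_le_div_right h1, Nat.div_le_div_right h2⟩
    have hsplit : (N j).card = ∑ cc ∈ Finset.Icc c1 c2, (Sc cc).card :=
      Finset.card_eq_sum_card_fiberwise hcover
    -- membership helpers
    have hloN : lo ∈ N j := (N j).min'_mem hne
    have hhiN : hi ∈ N j := (N j).max'_mem hne
    have hloA : lo ∈ A j := by rw [hN j] at hloN; exact (Finset.mem_inter.1 hloN).1
    have hhiA : hi ∈ A j := by rw [hN j] at hhiN; exact (Finset.mem_inter.1 hhiN).1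
    -- column description for cc < c2 (suffix form)
    have hScdesc : ∀ cc, c1 ≤ cc → cc < c2 →
        Sc cc = (Finset.univ.filter
          (fun i : Fin n => (i : ℕ) / w = cc ∧ (lo : ℕ) ≤ (i : ℕ))) ∩ C j := by
      intro cc hcc1 hcc2
      ext i
      simp only [hSc_def, Finset.mem_filter, Finset.mem_inter, Finset.mem_univ, true_and]
      constructor
      · rintro ⟨hiN, hdiv⟩
        have h1 : lo ≤ i := (N j).min'_le i hiN
        rw [Fin.le_def] at h1
        refine ⟨⟨hdiv, h1⟩, ?_⟩
        rw [hN j] at hiN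
        exact (Finset.mem_inter.1 hiN).2
      · rintro ⟨⟨hdiv, hge⟩, hiC⟩
        have hile : (i : ℕ) ≤ (hi : ℕ) := by
          by_contra hgt
          have : c2 ≤ (i : ℕ) / w := Nat.div_le_div_right (by omega)
          omega
        have hiA : i ∈ A j := by
          apply hA j lo i hi
          · rw [Fin.le_def]; exact hge
          · rw [Fin.le_def]; exact hile
          · exact hloA
          · exact hhiA
        refine ⟨?_, hdiv⟩
        rw [hN j]
        exact Finset.mem_inter.2 ⟨hiA, hiC⟩
    -- column description for c2 (prefix form)
    have hScdesc2 : Sc c2 = (Finset.univ.filter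
        (fun i : Fin n => (i : ℕ) / w = c2 ∧ (i : ℕ) ≤ (hi : ℕ))) ∩ C j := by
      ext i
      simp only [hSc_def, Finset.mem_filter, Finset.mem_inter, Finset.mem_univ, true_and]
      constructor
      · rintro ⟨hiN, hdiv⟩
        have h2 : i ≤ hi := (N j).le_max' i hiN
        rw [Fin.le_def] at h2
        refine ⟨⟨hdiv, h2⟩, ?_⟩
        rw [hN j] at hiN
        exact (Finset.mem_inter.1 hiN).2
      · rintro ⟨⟨hdiv, hle⟩, hiC⟩
        have hige : (lo : ℕ) ≤ (i : ℕ) := by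
          by_contra hgt
          have : (i : ℕ) / w ≤ c1 := Nat.div_le_div_right (by omega)
          omega
        have hiA : i ∈ A j := by
          apply hA j lo i hi
          · rw [Fin.le_def]; exact hige
          · rw [Fin.le_def]; exact hle
          · exact hloA
          · exact hhiA
        refine ⟨?_, hdiv⟩
        rw [hN j]
        exact Finset.mem_inter.2 ⟨hiA, hiC⟩
    have heL : e < L + 1 := by omega
    -- charged families for the suffix columns
    have hGA : ∀ cc : ℕ, ∃ G : Finset (Finset (Fin n)), cc ∈ Finset.Ico c1 c2 →
        (G.card = (Sc cc).card - (t - 1) ∧ G ⊆ CanA.filter (fun T => T ⊆ N j) ∧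
         ∀ T ∈ G, T ⊆ Sc cc ∧ T.card = t) := by
      intro cc
      by_cases hcc : cc ∈ Finset.Ico c1 c2
      swap
      · exact ⟨∅, fun h => absurd h hcc⟩
      simp only [Finset.mem_Ico] at hcc
      have hdesc := hScdesc cc hcc.1 hcc.2
      have hblk : ∀ i ∈ Sc cc, (i : ℕ) / b ^ e = cc := by
        intro i hi'
        exact (Finset.mem_filter.1 hi').2
      have hU : ∀ q ∈ Sc cc, (suffF b e q) ∩ C j ⊆ Sc cc := by
        intro q hq i hi2
        obtain ⟨hiU, hiC⟩ := Finset.mem_inter.1 hi2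
        simp only [suffF, Finset.mem_filter, Finset.mem_univ, true_and] at hiU
        have hqN : q ∈ N j := (Finset.mem_filter.1 hq).1
        have hqlo : (lo : ℕ) ≤ (q : ℕ) := by
          have := (N j).min'_le q hqN
          rwa [Fin.le_def] at this
        rw [hdesc]
        refine Finset.mem_inter.2 ⟨?_, hiC⟩
        refine Finset.mem_filter.2 ⟨Finset.mem_univ _, ?_, by omega⟩
        rw [hiU.1, hblk q hq]
      obtain ⟨G, hGcard, hGmem⟩ :=
        charge_suff yk hyk ht (hC j) hdesc hblk hU
      refine ⟨G, fun _ => ⟨hGcard, ?_, fun T hT => ⟨(hGmem T hT).2.1, (hGmem T hT).2.2⟩⟩⟩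
      intro T hT
      obtain ⟨⟨q, jj, hjj, hTeq⟩, hTsub, hTcard⟩ := hGmem T hT
      refine Finset.mem_filter.2 ⟨?_, hTsub.trans (Finset.filter_subset _ _)⟩
      refine Finset.mem_filter.2 ⟨?_, hTcard⟩
      apply Finset.mem_image.2
      refine ⟨(e, q, jj), ?_, hTeq.symm⟩
      simp only [Finset.mem_product, Finset.mem_range, Finset.mem_univ]
      exact ⟨heL, trivial, hjj⟩
    choose GA hGA' using hGA
    -- charged family for the prefix column c2
    have hGP : ∃ G : Finset (Finset (Fin n)),
        G.card = (Sc c2).card - (t - 1) ∧ G ⊆ CanP.filter (fun T => T ⊆ N j) := by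
      have hblk : ∀ i ∈ Sc c2, (i : ℕ) / b ^ e = c2 := by
        intro i hi'
        exact (Finset.mem_filter.1 hi').2
      have hU : ∀ q ∈ Sc c2, (prefF b e q) ∩ C j ⊆ Sc c2 := by
        intro q hq i hi2
        obtain ⟨hiU, hiC⟩ := Finset.mem_inter.1 hi2
        simp only [prefF, Finset.mem_filter, Finset.mem_univ, true_and] at hiU
        have hqN : q ∈ N j := (Finset.mem_filter.1 hq).1
        have hqhi : (q : ℕ) ≤ (hi : ℕ) := by
          have := (N j).le_max' q hqN
          rwa [Fin.le_def] at this
        rw [hScdesc2]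
        refine Finset.mem_inter.2 ⟨?_, hiC⟩
        refine Finset.mem_filter.2 ⟨Finset.mem_univ _, ?_, by omega⟩
        rw [hiU.1, hblk q hq]
      obtain ⟨G, hGcard, hGmem⟩ :=
        charge_pref yk hyk ht (hC j) hScdesc2 hblk hU
      refine ⟨G, hGcard, ?_⟩
      intro T hT
      obtain ⟨⟨q, jj, hjj, hTeq⟩, hTsub, hTcard⟩ := hGmem T hT
      refine Finset.mem_filter.2 ⟨?_, hTsub.trans (Finset.filter_subset _ _)⟩
      refine Finset.mem_filter.2 ⟨?_, hTcard⟩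
      apply Finset.mem_image.2
      refine ⟨(e, q, jj), ?_, hTeq.symm⟩
      simp only [Finset.mem_product, Finset.mem_range, Finset.mem_univ]
      exact ⟨heL, trivial, hjj⟩
    obtain ⟨GP, hGPcard, hGPsub⟩ := hGP
    -- sum over suffix columns
    have hdisj : ∀ x ∈ Finset.Ico c1 c2, ∀ y ∈ Finset.Ico c1 c2, x ≠ y →
        Disjoint (GA x) (GA y) := by
      intro x hx y hy hxy
      rw [Finset.disjoint_left]
      intro T hTx hTy
      have h1 := (hGA' x hx).2.2 T hTx
      have h2 := (hGA' y hy).2.2 T hTy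
      have hTne2 : T.Nonempty := Finset.card_pos.1 (by rw [h1.2]; omega)
      obtain ⟨i, hiT⟩ := hTne2
      have e1 := (Finset.mem_filter.1 (h1.1 hiT)).2
      have e2 := (Finset.mem_filter.1 (h2.1 hiT)).2
      exact hxy (e1.symm.trans e2)
    have hsumA : ∑ cc ∈ Finset.Ico c1 c2, ((Sc cc).card - (t - 1)) ≤
        (CanA.filter (fun T => T ⊆ N j)).card := by
      have hcardeq : ∑ cc ∈ Finset.Ico c1 c2, ((Sc cc).card - (t - 1)) =
          ((Finset.Ico c1 c2).biUnion GA).card := by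
        rw [Finset.card_biUnion hdisj]
        exact Finset.sum_congr rfl (fun cc hcc => ((hGA' cc hcc).1).symm)
      rw [hcardeq]
      apply Finset.card_le_card
      intro T hT
      obtain ⟨cc, hcc, hTcc⟩ := Finset.mem_biUnion.1 hT
      exact (hGA' cc hcc).2.1 hTcc
    have hsumP : (Sc c2).card - (t - 1) ≤ (CanP.filter (fun T => T ⊆ N j)).card := by
      rw [← hGPcard]
      exact Finset.card_le_card hGPsub
    -- assemble the per-rectangle bound
    have hIcc : Finset.Icc c1 c2 = insert c2 (Finset.Ico c1 c2) := by
      ext x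
      simp only [Finset.mem_Icc, Finset.mem_insert, Finset.mem_Ico]
      omega
    have hcardIcc : (Finset.Icc c1 c2).card ≤ b := by
      rw [Nat.card_Icc]
      omega
    have hsum2 : ∑ cc ∈ Finset.Icc c1 c2, (Sc cc).card ≤
        (∑ cc ∈ Finset.Icc c1 c2, ((Sc cc).card - (t - 1))) + (t - 1) * b := by
      calc ∑ cc ∈ Finset.Icc c1 c2, (Sc cc).card
          ≤ ∑ cc ∈ Finset.Icc c1 c2, (((Sc cc).card - (t - 1)) + (t - 1)) := by
            apply Finset.sum_le_sum
            intro cc _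
            omega
        _ = (∑ cc ∈ Finset.Icc c1 c2, ((Sc cc).card - (t - 1))) +
            (Finset.Icc c1 c2).card * (t - 1) := by
            rw [Finset.sum_add_distrib, Finset.sum_const, smul_eq_mul]
        _ ≤ _ := by
            have : (Finset.Icc c1 c2).card * (t - 1) ≤ (t - 1) * b := by
              rw [Nat.mul_comm]
              exact Nat.mul_le_mul_left _ hcardIcc
            omega
    have hsum3 : ∑ cc ∈ Finset.Icc c1 c2, ((Sc cc).card - (t - 1)) =
        ((Sc c2).card - (t - 1)) + ∑ cc ∈ Finset.Ico c1 c2, ((Sc cc).card - (t - 1)) := by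
      rw [hIcc, Finset.sum_insert (by simp)]
    omega
  -- global assembly
  have hAfin : ∀ T ∈ CanA, T.card = t := fun T hT => (Finset.mem_filter.1 hT).2
  have hPfin : ∀ T ∈ CanP, T.card = t := fun T hT => (Finset.mem_filter.1 hT).2
  calc ∑ j, (N j).card
      ≤ ∑ j, ((CanA.filter (fun T => T ⊆ N j)).card +
          (CanP.filter (fun T => T ⊆ N j)).card + ((t - 1) * b + 1)) :=
        Finset.sum_le_sum (fun j _ => hperj j)
    _ = (∑ j, (CanA.filter (fun T => T ⊆ N j)).card) +
        (∑ j, (CanP.filter (fun T => T ⊆ N j)).card) + ((t - 1) * b + 1) * m := by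
        rw [Finset.sum_add_distrib, Finset.sum_add_distrib, Finset.sum_const,
          Finset.card_univ, Fintype.card_fin, smul_eq_mul, Nat.mul_comm]
    _ ≤ CanA.card * (g * t - 1) + CanP.card * (g * t - 1) + ((t - 1) * b + 1) * m := by
        have h1 := hglobal CanA hAfin
        have h2 := hglobal CanP hPfin
        omega
    _ ≤ 2 * (g * t) * t * n * (L + 1) + ((t - 1) * b + 1) * m := by
        have h1 : CanA.card * (g * t - 1) ≤ ((L + 1) * (n * t)) * (g * t) :=
          Nat.mul_le_mul hCanAcard (by omega)
        have h2 : CanP.card * (g * t - 1) ≤ ((L + 1) * (n * t)) * (g * t) :=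
          Nat.mul_le_mul hCanPcard (by omega)
        have h3 : ((L + 1) * (n * t)) * (g * t) + ((L + 1) * (n * t)) * (g * t) =
            2 * (g * t) * t * n * (L + 1) := by ring
        omega

end core

end PRZ

/-- Lopsided Zarankiewicz bound for points vs. axis-parallel rectangles in the
plane, with a divide-and-conquer parameter `b`:
if the incidence graph is `K_{t,gt}`-free (`t` on the side of the points), it has
`O(g·t²·n·log_b n + b·t·m)` edges. -/
theorem points_rectangles_zarankiewicz :
    ∃ C : ℝ, ∀ (n m t g b : ℕ), 1 ≤ t → 1 ≤ g → 2 ≤ b → b ≤ n →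
      ∀ (P : Fin n → ℝ × ℝ) (B : Fin m → Set (ℝ × ℝ)),
      (∀ j, ∃ x1 x2 y1 y2 : ℝ, x1 ≤ x2 ∧ y1 ≤ y2 ∧
          B j = Set.Icc x1 x2 ×ˢ Set.Icc y1 y2) →
      (¬ ∃ (S : Finset (Fin n)) (T : Finset (Fin m)), S.card = t ∧ T.card = g * t ∧
          ∀ i ∈ S, ∀ j ∈ T, P i ∈ B j) →
      ({p : Fin n × Fin m | P p.1 ∈ B p.2}.ncard : ℝ)
        ≤ C * (g * t ^ 2 * n * Real.logb b n + b * t * m) := by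
  classical
  refine ⟨7, ?_⟩
  intro n m t g b ht hg hb hbn P B hB hfree
  -- sorting permutations for the two coordinates
  set σ : Equiv.Perm (Fin n) := Tuple.sort (fun i => (P i).1) with hσ
  set τ : Equiv.Perm (Fin n) := Tuple.sort (fun i => (P i).2) with hτ
  have hσmono : Monotone (fun k => (P (σ k)).1) := Tuple.monotone_sort (fun i => (P i).1)
  have hτmono : Monotone (fun k => (P (τ k)).2) := Tuple.monotone_sort (fun i => (P i).2)
  set yk : Fin n → ℕ := fun k => ((τ.symm (σ k)) : ℕ) with hykdef
  have hyk : Function.Injective yk := by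
    intro a a' haa
    have h1 : τ.symm (σ a) = τ.symm (σ a') := Fin.ext haa
    exact σ.injective (τ.symm.injective h1)
  choose x1 x2 y1 y2 hx12 hy12 hBeq using hB
  set N : Fin m → Finset (Fin n) :=
    fun j => Finset.univ.filter (fun k => P (σ k) ∈ B j) with hNdef
  set A : Fin m → Finset (Fin n) :=
    fun j => Finset.univ.filter (fun k => (P (σ k)).1 ∈ Set.Icc (x1 j) (x2 j)) with hAdef
  set C : Fin m → Finset (Fin n) :=
    fun j => Finset.univ.filter (fun k => (P (σ k)).2 ∈ Set.Icc (y1 j) (y2 j)) with hCdef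
  have hN : ∀ j, N j = A j ∩ C j := by
    intro j
    ext k
    simp only [hNdef, hAdef, hCdef, Finset.mem_filter, Finset.mem_inter, Finset.mem_univ,
      true_and]
    rw [hBeq j]
    exact Set.mem_prod
  have hAconv : ∀ j, ∀ i1 i2 i3 : Fin n, i1 ≤ i2 → i2 ≤ i3 → i1 ∈ A j → i3 ∈ A j →
      i2 ∈ A j := by
    intro j i1 i2 i3 h12 h23 h1 h3
    simp only [hAdef, Finset.mem_filter, Finset.mem_univ, true_and, Set.mem_Icc] at h1 h3 ⊢
    exact ⟨h1.1.trans (hσmono h12), (hσmono h23).trans h3.2⟩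
  have hCconv : ∀ j, PRZ.YConvex yk (C j) := by
    intro j i1 i2 i3 h12 h23 h1 h3
    simp only [hCdef, Finset.mem_filter, Finset.mem_univ, true_and, Set.mem_Icc] at h1 h3 ⊢
    have hy12' : (P (σ i1)).2 ≤ (P (σ i2)).2 := by
      have : τ.symm (σ i1) ≤ τ.symm (σ i2) := by
        rw [Fin.le_def]; exact h12
      have := hτmono this
      simpa using this
    have hy23' : (P (σ i2)).2 ≤ (P (σ i3)).2 := by
      have : τ.symm (σ i2) ≤ τ.symm (σ i3) := by
        rw [Fin.le_def]; exact h23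
      have := hτmono this
      simpa using this
    exact ⟨h1.1.trans hy12', hy23'.trans h3.2⟩
  have hK : ∀ (S : Finset (Fin n)) (T : Finset (Fin m)), S.card = t → T.card = g * t →
      ¬(∀ i ∈ S, ∀ j ∈ T, i ∈ N j) := by
    intro S T hS hT hall
    apply hfree
    refine ⟨S.image σ, T, ?_, hT, ?_⟩
    · rw [Finset.card_image_of_injective _ σ.injective]; exact hS
    · intro i hi j hj
      obtain ⟨k, hk, rfl⟩ := Finset.mem_image.1 hi
      have := hall k hk j hj
      simpa only [hNdef, Finset.mem_filter, Finset.mem_univ, true_and] using this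
  set L := Nat.clog b n with hLdef
  have hbn' : n ≤ b ^ L := Nat.le_pow_clog (by omega) n
  have hcore := PRZ.core ht hg hb hbn' yk hyk N A C hN hAconv hCconv hK
  -- identify the LHS with the sum
  have hncard : {p : Fin n × Fin m | P p.1 ∈ B p.2}.ncard = ∑ j, (N j).card := by
    have hset : {p : Fin n × Fin m | P p.1 ∈ B p.2} =
        ↑(Finset.univ.filter (fun p : Fin n × Fin m => P p.1 ∈ B p.2)) := by
      ext p; simp
    rw [hset, Set.ncard_coe_finset]
    rw [Finset.card_eq_sum_card_fiberwise
      (f := Prod.snd) (t := Finset.univ) (fun x _ => Finset.mem_univ _)]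
    apply Finset.sum_congr rfl
    intro j _
    apply Finset.card_bij (fun p _ => σ.symm p.1)
    · intro p hp
      simp only [Finset.mem_filter, Finset.mem_univ, true_and] at hp
      simp only [hNdef, Finset.mem_filter, Finset.mem_univ, true_and,
        Equiv.apply_symm_apply]
      rw [hp.2] at hp
      exact hp.1
    · intro p hp p' hp' he
      simp only [Finset.mem_filter, Finset.mem_univ, true_and] at hp hp'
      have h1 : p.1 = p'.1 := σ.symm.injective he
      have h2 : p.2 = p'.2 := by rw [hp.2, hp'.2]
      exact Prod.ext h1 h2
    · intro k hk
      simp only [hNdef, Finset.mem_filter, Finset.mem_univ, true_and] at hk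
      refine ⟨(σ k, j), ?_, by simp⟩
      simp only [Finset.mem_filter, Finset.mem_univ, true_and]
      exact ⟨hk, trivial⟩
  -- numeric facts
  have hn2 : 2 ≤ n := le_trans hb hbn
  have hL1 : 1 ≤ L := Nat.clog_pos (by omega) (by omega)
  have hpow : b ^ (L - 1) < n := Nat.pow_pred_clog_lt_self (by omega) (by omega)
  have hb1R : (1 : ℝ) < (b : ℝ) := by exact_mod_cast hb
  have hlogb1 : 1 ≤ Real.logb b n := by
    have h1 : Real.logb b b ≤ Real.logb b n := by
      apply Real.logb_le_logb_of_le hb1R (by positivity)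
      exact_mod_cast hbn
    rwa [Real.logb_self_eq_one hb1R] at h1
  have hLlog : (L : ℝ) ≤ Real.logb b n + 1 := by
    have h1 : ((b : ℝ)) ^ ((L - 1 : ℕ)) < (n : ℝ) := by exact_mod_cast hpow
    have h2 : Real.logb b ((b : ℝ) ^ ((L - 1 : ℕ))) ≤ Real.logb b n := by
      apply Real.logb_le_logb_of_le hb1R (by positivity) (le_of_lt h1)
    rw [Real.logb_pow, Real.logb_self_eq_one hb1R, mul_one] at h2
    have h3 : ((L - 1 : ℕ) : ℝ) = (L : ℝ) - 1 := by
      push_cast [Nat.cast_sub hL1]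
      ring
    rw [h3] at h2
    linarith
  have hL3 : ((L : ℝ) + 1) ≤ 3 * Real.logb b n := by linarith
  -- cast the core bound
  have hcast : ({p : Fin n × Fin m | P p.1 ∈ B p.2}.ncard : ℝ) ≤
      2 * (g * t) * t * n * (L + 1) + ((t - 1) * b + 1) * m := by
    rw [hncard]
    exact_mod_cast hcore
  have htR : (1 : ℝ) ≤ (t : ℝ) := by exact_mod_cast ht
  have hgR : (1 : ℝ) ≤ (g : ℝ) := by exact_mod_cast hg
  have hbR : (2 : ℝ) ≤ (b : ℝ) := by exact_mod_cast hb
  have hnR : (0 : ℝ) ≤ (n : ℝ) := Nat.cast_nonneg n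
  have hmR : (0 : ℝ) ≤ (m : ℝ) := Nat.cast_nonneg m
  have hcast2 : (((t - 1) * b + 1 : ℕ) : ℝ) ≤ (t : ℝ) * b := by
    have h1 : (((t - 1) : ℕ) : ℝ) = (t : ℝ) - 1 := by
      push_cast [Nat.cast_sub ht]; ring
    push_cast [h1]
    nlinarith
  have hterm1 : (2 * (g * t) * t * n * (L + 1) : ℝ) ≤
      6 * ((g : ℝ) * t ^ 2 * n * Real.logb b n) := by
    have hpos : (0 : ℝ) ≤ 2 * (g : ℝ) * t * t * n := by positivity
    calc (2 * (g * t) * t * n * (L + 1) : ℝ)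
        = (2 * (g : ℝ) * t * t * n) * ((L : ℝ) + 1) := by ring
      _ ≤ (2 * (g : ℝ) * t * t * n) * (3 * Real.logb b n) := by
          apply mul_le_mul_of_nonneg_left hL3 hpos
      _ = 6 * ((g : ℝ) * t ^ 2 * n * Real.logb b n) := by ring
  have hterm2 : ((((t - 1) * b + 1 : ℕ) : ℝ) * m) ≤ (b : ℝ) * t * m := by
    have := mul_le_mul_of_nonneg_right hcast2 hmR
    calc ((((t - 1) * b + 1 : ℕ) : ℝ) * m) ≤ ((t : ℝ) * b) * m := this
      _ = (b : ℝ) * t * m := by ring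
  have hX : (0 : ℝ) ≤ (g : ℝ) * t ^ 2 * n * Real.logb b n := by
    have : (0:ℝ) ≤ Real.logb b n := by linarith
    positivity
  have hY : (0 : ℝ) ≤ (b : ℝ) * t * m := by positivity
  calc ({p : Fin n × Fin m | P p.1 ∈ B p.2}.ncard : ℝ)
      ≤ 2 * (g * t) * t * n * (L + 1) + ((t - 1) * b + 1) * m := hcast
    _ ≤ 6 * ((g : ℝ) * t ^ 2 * n * Real.logb b n) + (b : ℝ) * t * m := by
        have h2 : ((((t - 1) * b + 1 : ℕ) : ℝ) * m) = (((t:ℝ) - 1) * b + 1) * m := by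
          push_cast [Nat.cast_sub ht]; ring
        push_cast [Nat.cast_sub ht] at hterm2 ⊢
        linarith [hterm1]
    _ ≤ 7 * ((g : ℝ) * t ^ 2 * n * Real.logb b n + (b : ℝ) * t * m) := by linarith
end

section
/- Every intersection between two axis-parallel boxes in ℝ^d is either a vertex containment intersection (a vertex of one box lies in the other) or a facet intersection (a facet of one box intersects a facet of the other). -/
/-- Every intersection between two axis-parallel boxes in `ℝ^d` is either a vertex
containment intersection (a vertex of one box lies in the other) or a facet
intersection (a facet of one box intersects a facet of the other). -/
theorem box_intersection_dichotomy (d : ℕ) (l u l' u' : Fin d → ℝ)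
    (h₁ : l ≤ u) (h₂ : l' ≤ u')
    (hint : (Set.Icc l u ∩ Set.Icc l' u').Nonempty) :
    -- a vertex of the first box lies in the second box
    (∃ v : Fin d → ℝ, (∀ k, v k = l k ∨ v k = u k) ∧ v ∈ Set.Icc l' u') ∨
    -- a vertex of the second box lies in the first box
    (∃ v : Fin d → ℝ, (∀ k, v k = l' k ∨ v k = u' k) ∧ v ∈ Set.Icc l u) ∨
    -- a facet of the first box meets a facet of the second box
    (∃ (k k' : Fin d) (x : Fin d → ℝ),
      x ∈ Set.Icc l u ∧ x ∈ Set.Icc l' u' ∧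
      (x k = l k ∨ x k = u k) ∧ (x k' = l' k' ∨ x k' = u' k')) := by
  obtain ⟨z, hz1, hz2⟩ := hint
  rw [Set.mem_Icc] at hz1 hz2
  by_cases hP : ∀ k, (l' k ≤ l k ∧ l k ≤ u' k) ∨ (l' k ≤ u k ∧ u k ≤ u' k)
  · left
    refine ⟨fun k => if l' k ≤ l k ∧ l k ≤ u' k then l k else u k, fun k => ?_, ?_⟩
    · by_cases h : l' k ≤ l k ∧ l k ≤ u' k <;> simp [h]
    · rw [Set.mem_Icc]
      constructor <;> intro k <;> by_cases h : l' k ≤ l k ∧ l k ≤ u' k <;>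
        simp only [h, if_pos, if_neg, if_true, if_false]
      · exact h.1
      · exact ((hP k).resolve_left h).1
      · exact h.2
      · exact ((hP k).resolve_left h).2
  by_cases hQ : ∀ k, (l k ≤ l' k ∧ l' k ≤ u k) ∨ (l k ≤ u' k ∧ u' k ≤ u k)
  · right; left
    refine ⟨fun k => if l k ≤ l' k ∧ l' k ≤ u k then l' k else u' k, fun k => ?_, ?_⟩
    · by_cases h : l k ≤ l' k ∧ l' k ≤ u k <;> simp [h]
    · rw [Set.mem_Icc]
      constructor <;> intro k <;> by_cases h : l k ≤ l' k ∧ l' k ≤ u k <;>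
        simp only [h, if_pos, if_neg, if_true, if_false]
      · exact h.1
      · exact ((hQ k).resolve_left h).1
      · exact h.2
      · exact ((hQ k).resolve_left h).2
  · right; right
    obtain ⟨a, ha⟩ := not_forall.mp hP
    obtain ⟨b, hb⟩ := not_forall.mp hQ
    have ha1 : l a < l' a := by
      by_contra h
      push_neg at h
      exact ha (Or.inl ⟨h, le_trans (hz1.1 a) (hz2.2 a)⟩)
    have ha2 : u' a < u a := by
      by_contra h
      push_neg at h
      exact ha (Or.inr ⟨le_trans (hz2.1 a) (hz1.2 a), h⟩)
    have hb1 : l' b < l b := by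
      by_contra h
      push_neg at h
      exact hb (Or.inl ⟨h, le_trans (hz2.1 b) (hz1.2 b)⟩)
    have hb2 : u b < u' b := by
      by_contra h
      push_neg at h
      exact hb (Or.inr ⟨le_trans (hz1.1 b) (hz2.2 b), h⟩)
    have hab : a ≠ b := by
      intro h
      rw [h] at ha1
      exact absurd ha1 (not_lt.mpr hb1.le)
    refine ⟨b, a, fun j => if j = b then l b else if j = a then l' a else max (l j) (l' j),
      ?_, ?_, ?_, ?_⟩
    · rw [Set.mem_Icc]
      constructor <;> intro j <;> dsimp only <;> split_ifs with h1 h2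
      · rw [h1]
      · rw [h2]; exact ha1.le
      · exact le_max_left _ _
      · rw [h1]; exact h₁ b
      · rw [h2]; exact le_trans (hz2.1 a) (hz1.2 a)
      · exact max_le (h₁ j) (le_trans (hz2.1 j) (hz1.2 j))
    · rw [Set.mem_Icc]
      constructor <;> intro j <;> dsimp only <;> split_ifs with h1 h2
      · rw [h1]; exact hb1.le
      · rw [h2]
      · exact le_max_right _ _
      · rw [h1]; exact le_trans (h₁ b) hb2.le
      · rw [h2]; exact h₂ a
      · exact max_le (le_trans (hz1.1 j) (hz2.2 j)) (h₂ j)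
    · left; simp
    · left; simp [hab]
end
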